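/- arXiv:2103.05316 — 6 statements merged into one kernel-verified Lean document; each statement's English description precedes it below -/
import Mathlib

section
/- For every p ∈ (0, 1/d), the critical curve satisfies the strict inequality q_c(p) > (1 − dp)/d^k. -/
open MeasureTheory ProbabilityTheory Filter

/-- Vertices of the tree `T_{d,k}`: finite sequences over `[d]`. The root is `[]`. -/
abbrev Vert (d : ℕ) := List (Fin d)

/-- A percolation configuration: a Boolean (open/closed) for every pair `(v, s)`;
the pair `(v, s)` represents the oriented edge from `v` to `v ++ s`.  Only pairs
with `s.length = 1` (short edges) or `s.length = k` (long edges) are actual edges. -/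
abbrev Config (d : ℕ) := (Vert d × List (Fin d)) → Bool

/-- One open oriented edge step from `v` to `w`. -/
def step (d k : ℕ) (ω : Config d) (v w : Vert d) : Prop :=
  ∃ s : List (Fin d), (s.length = 1 ∨ s.length = k) ∧ w = v ++ s ∧ ω (v, s) = true

/-- The cluster of a set `B` of vertices: all vertices reachable from `B`
by an oriented path of open edges (with the convention `B ⊆ cluster`). -/
def cluster (d k : ℕ) (ω : Config d) (B : Set (Vert d)) : Set (Vert d) :=
  {w | ∃ v ∈ B, Relation.ReflTransGen (step d k ω) v w}

/-- `μ` is the law of Bernoulli bond percolation on `T_{d,k}` in which,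
independently, every short edge is open with probability `p` and every
long edge is open with probability `q`. -/
def IsPercolation (d k : ℕ) (p q : ℝ) (μ : Measure (Config d)) : Prop :=
  IsProbabilityMeasure μ ∧
  iIndepFun (fun e (ω : Config d) => ω e) μ ∧
  (∀ v : Vert d, ∀ s : List (Fin d), s.length = 1 →
      (μ {ω | ω (v, s) = true}).toReal = p) ∧
  (∀ v : Vert d, ∀ s : List (Fin d), s.length = k →
      (μ {ω | ω (v, s) = true}).toReal = q)

/-- The critical curve `q_c(p) = inf {q : P_{p,q}(|C| = ∞) > 0}`. -/
noncomputable def qc (d k : ℕ) (μ : ℝ → ℝ → Measure (Config d)) (p : ℝ) : ℝ :=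
  sInf {q | q ∈ Set.Icc (0 : ℝ) 1 ∧
    0 < μ p q {ω | (cluster d k ω {([] : Vert d)}).Infinite}}

/-!
If the root reaches a vertex `w`, it does so along a path in which no open long edge has its
parallel path of `k` short edges entirely open, since such a long edge can be replaced by the
short ones. Recording, for each long edge of such a path, the position `i` of the first closed
short edge beside it turns the path into conditions on distinct edges, of probability `p` per
short step and `q p^i (1 - p)` per long step. Summing over these certificates, the root reaches
a given vertex at depth `m` with probability at most `a_m`, where
`a_{m+1} = p a_m + q (1 - p^k) a_{m+1-k}`; hence `d^m a_m ≤ θ^m` for some `θ < 1` as soon as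
`d p + d^k q (1 - p^k) < 1`. An infinite cluster contains a vertex with depth in `[n, n + k)`
for every `n`, an event of probability at most `k θ^n`. So `q_c(p) ≥ (1 - d p) / (d^k (1 - p^k))`,
which exceeds `(1 - d p) / d^k`; the infimum defining `q_c(p)` is over a nonempty set because
for `q = 1` the root percolates along long edges.
-/

variable {d k : ℕ}

def Satisfies {ι β : Type*} (ω : ι → β) (cs : List (ι × β)) : Prop :=
  ∀ c ∈ cs, ω c.1 = c.2

@[simp]
lemma satisfies_nil {ι β : Type*} (ω : ι → β) : Satisfies ω [] := by
  simp [Satisfies]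

@[simp]
lemma satisfies_cons {ι β : Type*} {ω : ι → β} {c : ι × β} {cs : List (ι × β)} :
    Satisfies ω (c :: cs) ↔ ω c.1 = c.2 ∧ Satisfies ω cs := by
  simp [Satisfies]

@[simp]
lemma satisfies_append {ι β : Type*} {ω : ι → β} {cs cs' : List (ι × β)} :
    Satisfies ω (cs ++ cs') ↔ Satisfies ω cs ∧ Satisfies ω cs' := by
  simp [Satisfies, or_imp, forall_and]

abbrev Constraint (d : ℕ) := (Vert d × List (Fin d)) × Bool

def shortPath : Vert d → List (Fin d) → List (Constraint d)
  | _, [] => []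
  | v, a :: l => ((v, [a]), true) :: shortPath (v ++ [a]) l

lemma exists_closed_of_not_satisfies_shortPath {ω : Config d} {v : Vert d} {s : List (Fin d)}
    (h : ¬ Satisfies ω (shortPath v s)) :
    ∃ pre a post, s = pre ++ a :: post ∧ Satisfies ω (shortPath v pre) ∧
      ω (v ++ pre, [a]) = false := by
  induction s generalizing v with
  | nil => exact absurd (satisfies_nil ω) h
  | cons a s ih =>
    cases ha : ω (v, [a]) with
    | false => exact ⟨[], a, s, rfl, satisfies_nil ω, by simpa using ha⟩
    | true =>
      obtain ⟨pre, b, post, rfl, hpre, hb⟩ :=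
        ih (v := v ++ [a]) fun hs => h (satisfies_cons.2 ⟨ha, hs⟩)
      exact ⟨a :: pre, b, post, rfl, satisfies_cons.2 ⟨ha, hpre⟩, by simpa using hb⟩

/-- A shape describes how a path to a vertex is certified by conditions on single edges:
`inl ()` is an open short edge, and `inr i` is an open long edge whose parallel path of
short edges is open along its first `i` edges and closed at the next one. -/
abbrev Shape (k : ℕ) := List (Unit ⊕ Fin k)

def entrySize (k : ℕ) : Unit ⊕ Fin k → ℕ := Sum.elim (fun _ => 1) (fun _ => k)

def shapeSize (k : ℕ) (σ : Shape k) : ℕ := (σ.map (entrySize k)).sum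

@[simp]
lemma shapeSize_nil : shapeSize k [] = 0 := rfl

@[simp]
lemma shapeSize_cons (e : Unit ⊕ Fin k) (σ : Shape k) :
    shapeSize k (e :: σ) = entrySize k e + shapeSize k σ := by
  simp [shapeSize]

def shapeConstraints (k : ℕ) :
    Vert d → List (Fin d) → Shape k → List (Constraint d)
  | _, _, [] => []
  | v, r, Sum.inl () :: σ =>
      ((v, r.take 1), true) :: shapeConstraints k (v ++ r.take 1) (r.drop 1) σ
  | v, r, Sum.inr i :: σ =>
      ((v, r.take k), true) :: (shortPath v (r.take i) ++
        ((v ++ r.take i, (r.drop i).take 1), false) ::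
          shapeConstraints k (v ++ r.take k) (r.drop k) σ)

def Certified (k : ℕ) (ω : Config d) (v : Vert d) (r : List (Fin d)) : Prop :=
  ∃ σ : Shape k, shapeSize k σ = r.length ∧ Satisfies ω (shapeConstraints k v r σ)

lemma certified_nil (ω : Config d) (v : Vert d) : Certified k ω v [] :=
  ⟨[], rfl, satisfies_nil ω⟩

lemma Certified.cons_short {ω : Config d} {v : Vert d} {a : Fin d} {r : List (Fin d)}
    (ha : ω (v, [a]) = true) (hr : Certified k ω (v ++ [a]) r) : Certified k ω v (a :: r) := by
  obtain ⟨σ, hσ, hsat⟩ := hr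
  refine ⟨Sum.inl () :: σ, ?_, ?_⟩
  · simp [hσ, entrySize, add_comm]
  · simpa [shapeConstraints, ha] using hsat

lemma Certified.append_shortPath {ω : Config d} {v : Vert d} {l r : List (Fin d)}
    (hl : Satisfies ω (shortPath v l)) (hr : Certified k ω (v ++ l) r) :
    Certified k ω v (l ++ r) := by
  induction l generalizing v with
  | nil => simpa using hr
  | cons a l ih =>
    rw [shortPath, satisfies_cons] at hl
    exact Certified.cons_short hl.1 (ih hl.2 (by simpa using hr))

lemma Certified.append_long {ω : Config d} {v : Vert d} {s r : List (Fin d)}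
    (hs : s.length = k) (hopen : ω (v, s) = true) (hpar : ¬ Satisfies ω (shortPath v s))
    (hr : Certified k ω (v ++ s) r) : Certified k ω v (s ++ r) := by
  obtain ⟨σ, hσ, hsat⟩ := hr
  obtain ⟨pre, a, post, rfl, hpre, hclosed⟩ := exists_closed_of_not_satisfies_shortPath hpar
  have hi : pre.length < k := by simp [← hs]
  refine ⟨Sum.inr ⟨pre.length, hi⟩ :: σ, ?_, ?_⟩
  · simp only [shapeSize_cons, entrySize, Sum.elim_inr, hσ, ← hs, List.length_append,
      List.length_cons]
  · have htake : (pre ++ a :: post ++ r).take k = pre ++ a :: post := List.take_left' hs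
    have hdrop : (pre ++ a :: post ++ r).drop k = r := List.drop_left' hs
    simp only [List.append_assoc, List.cons_append] at htake hdrop
    simp only [List.append_assoc, List.cons_append, shapeConstraints, htake, hdrop,
      List.take_left, List.drop_left, satisfies_cons, satisfies_append]
    exact ⟨hopen, hpre, hclosed, hsat⟩

lemma certified_of_reflTransGen {ω : Config d} {v w : Vert d}
    (h : Relation.ReflTransGen (step d k ω) v w) : ∃ r, w = v ++ r ∧ Certified k ω v r := by
  induction h using Relation.ReflTransGen.head_induction_on with
  | refl => exact ⟨[], by simp, certified_nil ω w⟩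
  | @head v _ hstep _ ih =>
    obtain ⟨s, hs, rfl, hopen⟩ := hstep
    obtain ⟨r, rfl, hr⟩ := ih
    refine ⟨s ++ r, by simp, ?_⟩
    rcases hs with hs | hs
    · obtain ⟨a, rfl⟩ := List.length_eq_one_iff.1 hs
      exact Certified.cons_short hopen hr
    · by_cases hpar : Satisfies ω (shortPath v s)
      · exact Certified.append_shortPath hpar hr
      · exact Certified.append_long hs hopen hpar hr

lemma mem_shortPath {v : Vert d} {l : List (Fin d)} {c : Constraint d}
    (hc : c ∈ shortPath v l) :
    c.1.2.length = 1 ∧ v.length ≤ c.1.1.length ∧ c.1.1.length < v.length + l.length := by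
  induction l generalizing v with
  | nil => cases hc
  | cons a l ih =>
    rcases List.mem_cons.1 hc with rfl | hc
    · simp
    · have := ih hc
      simp only [List.length_append, List.length_cons, List.length_nil] at this ⊢
      omega

lemma pairwise_shortPath (v : Vert d) (l : List (Fin d)) :
    (shortPath v l).Pairwise (fun c c' => c.1.1.length < c'.1.1.length) := by
  induction l generalizing v with
  | nil => exact List.Pairwise.nil
  | cons a l ih =>
    refine List.Pairwise.cons (fun c hc => ?_) (ih _)
    have := (mem_shortPath hc).2.1
    simp only [List.length_append, List.length_singleton] at this
    exact Nat.lt_of_succ_le this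

lemma le_length_of_mem_shapeConstraints {v : Vert d} {r : List (Fin d)} {σ : Shape k}
    {c : Constraint d} (hc : c ∈ shapeConstraints k v r σ) : v.length ≤ c.1.1.length := by
  induction σ generalizing v r with
  | nil => cases hc
  | cons e σ ih =>
    rcases e with ⟨⟩ | i
    · rcases List.mem_cons.1 hc with rfl | hc
      · exact le_rfl
      · exact (Nat.le_add_right _ _).trans (List.length_append ▸ ih hc)
    · simp only [shapeConstraints, List.mem_cons, List.mem_append] at hc
      rcases hc with rfl | hc | rfl | hc
      · exact le_rfl
      · exact (mem_shortPath hc).2.1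
      · exact (List.prefix_append _ _).length_le
      · exact (Nat.le_add_right _ _).trans (List.length_append ▸ ih hc)

def SeparatedEdges (c c' : Constraint d) : Prop :=
  c.1.1.length < c'.1.1.length ∨
    (c.1.1.length = c'.1.1.length ∧ c.1.2.length ≠ c'.1.2.length)

lemma pairwise_shapeConstraints (hk : 2 ≤ k) {v : Vert d} {r : List (Fin d)} {σ : Shape k}
    (hσ : shapeSize k σ = r.length) : (shapeConstraints k v r σ).Pairwise SeparatedEdges := by
  induction σ generalizing v r with
  | nil => exact List.Pairwise.nil
  | cons e σ ih =>
    rcases e with ⟨⟩ | i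
    · simp only [shapeSize_cons, entrySize, Sum.elim_inl] at hσ
      have h1 : (r.take 1).length = 1 := by rw [List.length_take]; omega
      refine List.Pairwise.cons (fun c hc => Or.inl ?_)
        (ih (by rw [List.length_drop]; omega))
      have := le_length_of_mem_shapeConstraints hc
      rw [List.length_append, h1] at this
      exact Nat.lt_of_succ_le this
    · simp only [shapeSize_cons, entrySize, Sum.elim_inr] at hσ
      have hi : (i : ℕ) < k := i.2
      have hik : (r.take i).length = i := by rw [List.length_take]; omega
      have hk' : (r.take k).length = k := by rw [List.length_take]; omega
      have h1 : ((r.drop i).take 1).length = 1 := by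
        rw [List.length_take, List.length_drop]; omega
      have hlev : ∀ c ∈ shapeConstraints k (v ++ r.take k) (r.drop k) σ,
          v.length + k ≤ c.1.1.length := fun c hc => by
        simpa only [List.length_append, hk'] using le_length_of_mem_shapeConstraints hc
      simp only [shapeConstraints, List.pairwise_cons, List.pairwise_append, List.mem_append,
        List.mem_cons]
      refine ⟨?_, pairwise_shortPath _ _ |>.imp Or.inl,
        ⟨fun c hc => Or.inl ?_, ih (by rw [List.length_drop]; omega)⟩, ?_⟩
      · rintro c (hc | rfl | hc)
        · obtain ⟨hc1, hcv, -⟩ := mem_shortPath hc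
          dsimp only [SeparatedEdges]
          rw [hc1, hk']
          omega
        · dsimp only [SeparatedEdges]
          rw [h1, hk', List.length_append, hik]
          omega
        · exact Or.inl (by have := hlev c hc; dsimp only; omega)
      · dsimp only
        rw [List.length_append, hik]
        have := hlev c hc
        omega
      · rintro c hc c' (rfl | hc')
        · have := (mem_shortPath hc).2.2
          rw [hik] at this
          exact Or.inl (by dsimp only; rw [List.length_append, hik]; omega)
        · have := (mem_shortPath hc).2.2
          have := hlev c' hc'
          exact Or.inl (by omega)

lemma nodup_shapeConstraints (hk : 2 ≤ k) {v : Vert d} {r : List (Fin d)} {σ : Shape k}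
    (hσ : shapeSize k σ = r.length) : ((shapeConstraints k v r σ).map Prod.fst).Nodup :=
  List.pairwise_map.2 <| (pairwise_shapeConstraints hk hσ).imp fun h heq => by
    rcases h with h | ⟨-, h⟩ <;> simp [heq] at h

lemma measure_satisfies {ι β : Type*} [MeasurableSpace β] [MeasurableSingletonClass β]
    {μ : Measure (ι → β)} (hind : iIndepFun (fun i ω => ω i) μ) {cs : List (ι × β)}
    (hcs : (cs.map Prod.fst).Nodup) :
    μ {ω | Satisfies ω cs} = (cs.map fun c => μ {ω | ω c.1 = c.2}).prod := by
  classical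
  have hfun : ∀ c ∈ cs, ∀ c' ∈ cs, c.1 = c'.1 → c = c' :=
    fun c hc c' hc' => List.inj_on_of_nodup_map hcs hc hc'
  have hvalues : ∀ c ∈ cs, {b | (c.1, b) ∈ cs} = {c.2} := fun c hc => by
    ext b
    exact ⟨fun hb => congrArg Prod.snd (hfun _ hb c hc rfl), fun hb => hb ▸ hc⟩
  have hev : {ω | Satisfies ω cs} =
      ⋂ i ∈ (cs.map Prod.fst).toFinset, (fun ω => ω i) ⁻¹' {b | (i, b) ∈ cs} := by
    ext ω
    simp only [Satisfies, Set.mem_ofPred_eq, Set.mem_iInter, List.mem_toFinset, List.mem_map,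
      Set.mem_preimage]
    refine ⟨?_, fun h c hc => ?_⟩
    · rintro h _ ⟨c, hc, rfl⟩
      simpa [h c hc] using hc
    · simpa using (hvalues c hc).subset (h c.1 ⟨c, hc, rfl⟩)
  rw [hev, hind.measure_inter_preimage_eq_mul _ ?_, List.prod_toFinset _ hcs, List.map_map]
  · refine congrArg List.prod (List.map_congr_left fun c hc => ?_)
    simp only [Function.comp_apply, hvalues c hc]
    rfl
  · simp only [List.mem_toFinset, List.mem_map]
    rintro _ ⟨c, hc, rfl⟩
    rw [hvalues c hc]
    exact measurableSet_singleton _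

lemma measureReal_satisfies {ι β : Type*} [MeasurableSpace β] [MeasurableSingletonClass β]
    {μ : Measure (ι → β)} (hind : iIndepFun (fun i ω => ω i) μ) {cs : List (ι × β)}
    (hcs : (cs.map Prod.fst).Nodup) :
    μ.real {ω | Satisfies ω cs} = (cs.map fun c => μ.real {ω | ω c.1 = c.2}).prod := by
  rw [Measure.real, measure_satisfies hind hcs]
  exact (map_list_prod ENNReal.toRealHom _).trans (by rw [List.map_map]; rfl)

def entryWeight (p q : ℝ) : Unit ⊕ Fin k → ℝ :=
  Sum.elim (fun _ => p) (fun i => q * (p ^ (i : ℕ) * (1 - p)))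

def shapeWeight (p q : ℝ) (σ : Shape k) : ℝ := (σ.map (entryWeight p q)).prod

@[simp]
lemma shapeWeight_nil (p q : ℝ) : shapeWeight p q ([] : Shape k) = 1 := rfl

@[simp]
lemma shapeWeight_cons (p q : ℝ) (e : Unit ⊕ Fin k) (σ : Shape k) :
    shapeWeight p q (e :: σ) = entryWeight p q e * shapeWeight p q σ := by
  simp [shapeWeight]

section Percolation

variable {p q : ℝ} {μ : Measure (Config d)}

lemma IsPercolation.measureReal_short (hμ : IsPercolation d k p q μ) (v : Vert d)
    {s : List (Fin d)} (hs : s.length = 1) : μ.real {ω | ω (v, s) = true} = p :=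
  hμ.2.2.1 v s hs

lemma IsPercolation.measureReal_long (hμ : IsPercolation d k p q μ) (v : Vert d)
    {s : List (Fin d)} (hs : s.length = k) : μ.real {ω | ω (v, s) = true} = q :=
  hμ.2.2.2 v s hs

lemma IsPercolation.measureReal_short_closed (hμ : IsPercolation d k p q μ) (v : Vert d)
    {s : List (Fin d)} (hs : s.length = 1) : μ.real {ω | ω (v, s) = false} = 1 - p := by
  have := hμ.1
  have hcompl : {ω : Config d | ω (v, s) = false} = {ω | ω (v, s) = true}ᶜ := by
    ext ω; simp
  rw [hcompl, measureReal_compl (measurableSet_eq_fun (measurable_pi_apply _) measurable_const),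
    probReal_univ, hμ.measureReal_short v hs]

lemma IsPercolation.prod_shortPath (hμ : IsPercolation d k p q μ) (v : Vert d)
    (l : List (Fin d)) :
    ((shortPath v l).map fun c => μ.real {ω | ω c.1 = c.2}).prod = p ^ l.length := by
  induction l generalizing v with
  | nil => simp [shortPath]
  | cons a l ih =>
    simp [shortPath, ih, hμ.measureReal_short v (s := [a]) rfl, pow_succ, mul_comm]

lemma IsPercolation.prod_shapeConstraints (hμ : IsPercolation d k p q μ) {v : Vert d}
    {r : List (Fin d)} {σ : Shape k} (hσ : shapeSize k σ = r.length) :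
    ((shapeConstraints k v r σ).map fun c => μ.real {ω | ω c.1 = c.2}).prod =
      shapeWeight p q σ := by
  induction σ generalizing v r with
  | nil => simp [shapeConstraints]
  | cons e σ ih =>
    rcases e with ⟨⟩ | i
    · simp only [shapeSize_cons, entrySize, Sum.elim_inl] at hσ
      have hrest := ih (v := v ++ r.take 1) (r := r.drop 1) (by rw [List.length_drop]; omega)
      have hshort := hμ.measureReal_short v (s := r.take 1) (by rw [List.length_take]; omega)
      simp only [shapeConstraints, List.map_cons, List.prod_cons, hrest, hshort,
        shapeWeight_cons, entryWeight, Sum.elim_inl]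
    · simp only [shapeSize_cons, entrySize, Sum.elim_inr] at hσ
      have hi : (i : ℕ) < k := i.2
      have hrest := ih (v := v ++ r.take k) (r := r.drop k) (by rw [List.length_drop]; omega)
      have hlong := hμ.measureReal_long v (s := r.take k) (by rw [List.length_take]; omega)
      have hclosed := hμ.measureReal_short_closed (v ++ r.take i) (s := (r.drop i).take 1)
        (by rw [List.length_take, List.length_drop]; omega)
      have hlen : (r.take i).length = i := by rw [List.length_take]; omega
      simp only [shapeConstraints, List.map_cons, List.map_append, List.prod_cons,
        List.prod_append, hrest, hlong, hclosed, hμ.prod_shortPath, hlen, shapeWeight_cons,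
        entryWeight, Sum.elim_inr]
      ring

end Percolation

lemma length_le_shapeSize (hk : 1 ≤ k) (σ : Shape k) : σ.length ≤ shapeSize k σ := by
  induction σ with
  | nil => simp
  | cons e σ ih =>
    cases e <;> simp only [List.length_cons, shapeSize_cons, entrySize, Sum.elim_inl,
      Sum.elim_inr] <;> omega

noncomputable def shapes (k m : ℕ) : Finset (Shape k) :=
  (List.finite_length_le (Unit ⊕ Fin k) m).toFinset.filter (shapeSize k · = m)

lemma mem_shapes (hk : 1 ≤ k) {m : ℕ} {σ : Shape k} : σ ∈ shapes k m ↔ shapeSize k σ = m := by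
  simp only [shapes, Finset.mem_filter, Set.Finite.mem_toFinset, Set.mem_ofPred_eq,
    and_iff_right_iff_imp]
  exact fun h => h ▸ length_le_shapeSize hk σ

lemma shapes_succ (hk : 1 ≤ k) (m : ℕ) :
    shapes k (m + 1) = ({e | entrySize k e ≤ m + 1} : Finset (Unit ⊕ Fin k)).biUnion
      fun e => (shapes k (m + 1 - entrySize k e)).image (List.cons e) := by
  ext σ
  simp only [mem_shapes hk, Finset.mem_biUnion, Finset.mem_filter, Finset.mem_univ, true_and,
    Finset.mem_image]
  constructor
  · rcases σ with _ | ⟨e, σ⟩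
    · simp
    · intro h
      simp only [shapeSize_cons] at h
      exact ⟨e, by omega, σ, by omega, rfl⟩
  · rintro ⟨e, he, σ, hσ, rfl⟩
    simp only [shapeSize_cons]
    omega

lemma sum_shapeWeight_succ (hk : 1 ≤ k) (p q : ℝ) (m : ℕ) :
    ∑ σ ∈ shapes k (m + 1), shapeWeight p q σ =
      p * ∑ σ ∈ shapes k m, shapeWeight p q σ +
        if k ≤ m + 1 then q * (1 - p ^ k) * ∑ σ ∈ shapes k (m + 1 - k), shapeWeight p q σ
        else 0 := by
  have hgeom : ∑ i : Fin k, q * (p ^ (i : ℕ) * (1 - p)) = q * (1 - p ^ k) := by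
    rw [Fin.sum_univ_eq_sum_range (fun i => q * (p ^ i * (1 - p))), ← geom_sum_mul_neg,
      Finset.sum_mul, Finset.mul_sum]
  rw [shapes_succ hk, Finset.sum_biUnion]
  · simp only [Finset.sum_image fun _ _ _ _ h => List.cons_injective h, shapeWeight_cons,
      ← Finset.mul_sum, Finset.sum_filter, Fintype.sum_sum_type]
    simp only [entrySize, entryWeight, Sum.elim_inl, Sum.elim_inr, Finset.univ_unique,
      Finset.sum_singleton, le_add_iff_nonneg_left, zero_le, if_true, Nat.add_sub_cancel]
    by_cases hkm : k ≤ m + 1 <;> simp [hkm, ← hgeom, Finset.sum_mul]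
  · intro e _ e' _ hne
    simp only [Function.onFun, Finset.disjoint_left, Finset.mem_image]
    rintro _ ⟨σ, _, rfl⟩ ⟨σ', _, h⟩
    exact hne (List.cons_eq_cons.1 h).1.symm

theorem le_pow_of_le_recurrence {a : ℕ → ℝ} {α β θ : ℝ} {k : ℕ} (hk : 1 ≤ k)
    (hα : 0 ≤ α) (hβ : 0 ≤ β) (hθ : 0 ≤ θ) (hαθ : α ≤ θ) (hαβθ : α * θ ^ (k - 1) + β ≤ θ ^ k)
    (h0 : a 0 ≤ 1)
    (hrec : ∀ m, a (m + 1) ≤ α * a m + if k ≤ m + 1 then β * a (m + 1 - k) else 0) :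
    ∀ m, a m ≤ θ ^ m := by
  intro m
  induction m using Nat.strong_induction_on with
  | _ m ih =>
    rcases m with _ | m
    · simpa using h0
    refine (hrec m).trans ?_
    have hm := mul_le_mul_of_nonneg_left (ih m (by omega)) hα
    split_ifs with hkm
    · have hj := mul_le_mul_of_nonneg_left (ih (m + 1 - k) (by omega)) hβ
      have hm' : θ ^ m = θ ^ (m + 1 - k) * θ ^ (k - 1) := by rw [← pow_add]; congr 1; omega
      have hm1 : θ ^ (m + 1) = θ ^ (m + 1 - k) * θ ^ k := by rw [← pow_add]; congr 1; omega
      calc α * a m + β * a (m + 1 - k) ≤ α * θ ^ m + β * θ ^ (m + 1 - k) := by linarith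
        _ = θ ^ (m + 1 - k) * (α * θ ^ (k - 1) + β) := by rw [hm']; ring
        _ ≤ θ ^ (m + 1 - k) * θ ^ k := mul_le_mul_of_nonneg_left hαβθ (pow_nonneg hθ _)
        _ = θ ^ (m + 1) := hm1.symm
    · calc α * a m + 0 ≤ θ * θ ^ m := by
            simpa using hm.trans (mul_le_mul_of_nonneg_right hαθ (pow_nonneg hθ m))
        _ = θ ^ (m + 1) := (pow_succ' θ m).symm

lemma pow_mul_sum_shapeWeight_le (hk : 1 ≤ k) {p q θ : ℝ} (hp0 : 0 ≤ p) (hp1 : p ≤ 1)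
    (hq : 0 ≤ q) (hθ : 0 ≤ θ) (hpθ : d * p ≤ θ)
    (hpqθ : d * p * θ ^ (k - 1) + d ^ k * (q * (1 - p ^ k)) ≤ θ ^ k) (m : ℕ) :
    (d : ℝ) ^ m * ∑ σ ∈ shapes k m, shapeWeight p q σ ≤ θ ^ m := by
  have hshapes0 : shapes k 0 = {[]} := by
    ext σ
    rw [mem_shapes hk, Finset.mem_singleton]
    exact ⟨fun h => List.length_eq_zero_iff.1 (by have := length_le_shapeSize hk σ; omega),
      fun h => h ▸ rfl⟩
  refine le_pow_of_le_recurrence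
    (a := fun m => (d : ℝ) ^ m * ∑ σ ∈ shapes k m, shapeWeight p q σ) hk (by positivity)
    (by have := pow_le_one₀ hp0 hp1 (n := k); positivity) hθ hpθ hpqθ
    (by simp [hshapes0]) (fun m => le_of_eq ?_) m
  rw [sum_shapeWeight_succ hk]
  split_ifs with hkm
  · have hd : (d : ℝ) ^ (m + 1) = d ^ k * d ^ (m + 1 - k) := by
      rw [← pow_add]; congr 1; omega
    linear_combination (q * (1 - p ^ k) * ∑ σ ∈ shapes k (m + 1 - k), shapeWeight p q σ) * hd
  · ring

lemma measureReal_reach_le {p q : ℝ} {μ : Measure (Config d)} (hk : 2 ≤ k)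
    (hμ : IsPercolation d k p q μ) (w : Vert d) :
    μ.real {ω | Relation.ReflTransGen (step d k ω) [] w} ≤
      ∑ σ ∈ shapes k w.length, shapeWeight p q σ := by
  have := hμ.1
  have hcover : {ω | Relation.ReflTransGen (step d k ω) [] w} ⊆
      ⋃ σ ∈ shapes k w.length, {ω | Satisfies ω (shapeConstraints k [] w σ)} := by
    intro ω hω
    obtain ⟨r, rfl, σ, hσ, hsat⟩ := certified_of_reflTransGen hω
    exact Set.mem_biUnion ((mem_shapes (by omega)).2 hσ) hsat
  refine (measureReal_mono hcover (measure_ne_top _ _)).trans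
    ((measureReal_biUnion_finset_le _ _).trans_eq ?_)
  refine Finset.sum_congr rfl fun σ hσ => ?_
  have hσ := (mem_shapes (by omega)).1 hσ
  rw [measureReal_satisfies hμ.2.1 (nodup_shapeConstraints hk hσ), hμ.prod_shapeConstraints hσ]

lemma measureReal_reach_level_le {p q : ℝ} {μ : Measure (Config d)} (hk : 2 ≤ k)
    (hμ : IsPercolation d k p q μ) (m : ℕ) :
    μ.real {ω | ∃ w : Vert d, w.length = m ∧ Relation.ReflTransGen (step d k ω) [] w} ≤
      (d : ℝ) ^ m * ∑ σ ∈ shapes k m, shapeWeight p q σ := by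
  have := hμ.1
  have hcover : {ω | ∃ w : Vert d, w.length = m ∧ Relation.ReflTransGen (step d k ω) [] w} ⊆
      ⋃ w : List.Vector (Fin d) m, {ω | Relation.ReflTransGen (step d k ω) [] w.toList} := by
    rintro ω ⟨w, hw, hreach⟩
    exact Set.mem_iUnion.2 ⟨⟨w, hw⟩, hreach⟩
  calc _ ≤ ∑ w : List.Vector (Fin d) m,
        μ.real {ω | Relation.ReflTransGen (step d k ω) [] w.toList} :=
        (measureReal_mono hcover (measure_ne_top _ _)).trans (measureReal_iUnion_fintype_le _)
    _ ≤ ∑ _w : List.Vector (Fin d) m, ∑ σ ∈ shapes k m, shapeWeight p q σ :=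
        Finset.sum_le_sum fun w _ => by simpa using measureReal_reach_le hk hμ w.toList
    _ = (d : ℝ) ^ m * ∑ σ ∈ shapes k m, shapeWeight p q σ := by simp

lemma exists_reach_length_mem_Ico (hk : 1 ≤ k) {ω : Config d} {v w : Vert d}
    (h : Relation.ReflTransGen (step d k ω) v w) {n : ℕ} (hv : v.length < n + k)
    (hw : n ≤ w.length) :
    ∃ u, Relation.ReflTransGen (step d k ω) v u ∧ n ≤ u.length ∧ u.length < n + k := by
  induction h with
  | refl => exact ⟨v, .refl, hw, hv⟩
  | @tail u u' hvu hstep ih =>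
    by_cases hu : n ≤ u.length
    · exact ih hu
    · obtain ⟨s, hs, rfl, hopen⟩ := hstep
      refine ⟨u ++ s, hvu.tail ⟨s, hs, rfl, hopen⟩, hw, ?_⟩
      rcases hs with hs | hs <;> simp [hs] <;> omega

lemma measureReal_infinite_cluster_le {μ : Measure (Config d)} [IsFiniteMeasure μ]
    (hk : 1 ≤ k) {θ : ℝ} (hθ0 : 0 ≤ θ) (hθ1 : θ ≤ 1)
    (hlevel : ∀ m, μ.real {ω | ∃ w : Vert d, w.length = m ∧
      Relation.ReflTransGen (step d k ω) [] w} ≤ θ ^ m) (n : ℕ) :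
    μ.real {ω | (cluster d k ω {[]}).Infinite} ≤ k * θ ^ n := by
  have hcover : {ω | (cluster d k ω {[]}).Infinite} ⊆ ⋃ m ∈ Finset.Ico n (n + k),
      {ω | ∃ w : Vert d, w.length = m ∧ Relation.ReflTransGen (step d k ω) [] w} := by
    intro ω hinf
    obtain ⟨w, ⟨_, rfl, hw⟩, hwn⟩ :=
      Set.Infinite.exists_notMem_finite hinf (List.finite_length_lt (Fin d) n)
    obtain ⟨u, hu, hnu, hun⟩ :=
      exists_reach_length_mem_Ico hk hw (by simp; omega) (by simpa using hwn)
    exact Set.mem_biUnion (Finset.mem_Ico.2 ⟨hnu, hun⟩) ⟨u, rfl, hu⟩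
  calc _ ≤ ∑ m ∈ Finset.Ico n (n + k), μ.real {ω | ∃ w : Vert d, w.length = m ∧
        Relation.ReflTransGen (step d k ω) [] w} :=
        (measureReal_mono hcover (measure_ne_top _ _)).trans (measureReal_biUnion_finset_le _ _)
    _ ≤ ∑ m ∈ Finset.Ico n (n + k), θ ^ n := Finset.sum_le_sum fun m hm =>
        (hlevel m).trans (pow_le_pow_of_le_one hθ0 hθ1 (Finset.mem_Ico.1 hm).1)
    _ = k * θ ^ n := by simp

lemma exists_lt_one_mul_pow_add_le_pow {A B : ℝ} (hA : 0 ≤ A) (hB : 0 ≤ B) (hAB : A + B < 1)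
    {k : ℕ} (hk : 1 ≤ k) : ∃ θ < 1, A ≤ θ ∧ A * θ ^ (k - 1) + B ≤ θ ^ k := by
  set δ := (1 - (A + B)) / k
  have hk' : (1 : ℝ) ≤ k := by exact_mod_cast hk
  have hδ0 : 0 < δ := div_pos (by linarith) (by linarith)
  have hδ : δ ≤ 1 - (A + B) := div_le_self (by linarith) hk'
  have hkδ : k * δ = 1 - (A + B) := mul_div_cancel₀ _ (by positivity)
  refine ⟨1 - δ, by linarith, by linarith, ?_⟩
  have hpow : A * (1 - δ) ^ (k - 1) ≤ A :=
    mul_le_of_le_one_right hA (pow_le_one₀ (by linarith) (by linarith))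
  have hbern : 1 + k * (-δ) ≤ (1 + -δ) ^ k := one_add_mul_le_pow (by linarith) k
  rw [← sub_eq_add_neg] at hbern
  linarith

theorem measure_infinite_cluster_eq_zero {p q : ℝ} {μ : Measure (Config d)} (hk : 2 ≤ k)
    (hμ : IsPercolation d k p q μ) (hp0 : 0 ≤ p) (hp1 : p ≤ 1) (hq : 0 ≤ q)
    (hsub : d * p + d ^ k * (q * (1 - p ^ k)) < 1) :
    μ {ω | (cluster d k ω {[]}).Infinite} = 0 := by
  have := hμ.1
  obtain ⟨θ, hθ1, hpθ, hpqθ⟩ := exists_lt_one_mul_pow_add_le_pow (by positivity)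
    (by have := pow_le_one₀ hp0 hp1 (n := k); positivity) hsub (k := k) (by omega)
  have hθ0 : 0 ≤ θ := le_trans (by positivity) hpθ
  have hbound := measureReal_infinite_cluster_le (μ := μ) (by omega) hθ0 hθ1.le fun m =>
    (measureReal_reach_level_le hk hμ m).trans
      (pow_mul_sum_shapeWeight_le (by omega) hp0 hp1 hq hθ0 hpθ hpqθ m)
  have hlim : Tendsto (fun n : ℕ => (k : ℝ) * θ ^ n) atTop (nhds 0) := by
    simpa using (tendsto_pow_atTop_nhds_zero_of_lt_one hθ0 hθ1).const_mul (k : ℝ)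
  exact (measureReal_eq_zero_iff (measure_ne_top _ _)).1
    (le_antisymm (ge_of_tendsto' hlim hbound) measureReal_nonneg)

lemma infinite_cluster_of_forall_long_open (hk : 1 ≤ k) {ω : Config d} (z : Fin d)
    (h : ∀ j, ω (List.replicate (j * k) z, List.replicate k z) = true) :
    (cluster d k ω {[]}).Infinite := by
  have hreach : ∀ j, Relation.ReflTransGen (step d k ω) [] (List.replicate (j * k) z) := by
    intro j
    induction j with
    | zero => simpa using Relation.ReflTransGen.refl
    | succ j ih =>
      refine ih.tail ⟨List.replicate k z, Or.inr List.length_replicate, ?_, h j⟩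
      rw [← List.replicate_add, Nat.succ_mul]
  refine Set.infinite_of_injective_forall_mem (f := fun j => List.replicate (j * k) z)
    (fun i j hij => ?_) fun j => ⟨[], rfl, hreach j⟩
  simpa [Nat.mul_left_inj (by omega : k ≠ 0)] using congrArg List.length hij

theorem measure_infinite_cluster_pos {p : ℝ} {μ : Measure (Config d)} (hd : 0 < d) (hk : 1 ≤ k)
    (hμ : IsPercolation d k p 1 μ) : 0 < μ {ω | (cluster d k ω {[]}).Infinite} := by
  have := hμ.1
  have hlong : ∀ᵐ ω ∂μ, ∀ j,
      ω (List.replicate (j * k) ⟨0, hd⟩, List.replicate k ⟨0, hd⟩) = true := by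
    refine ae_all_iff.2 fun j => ?_
    have h1 := hμ.measureReal_long (List.replicate (j * k) ⟨0, hd⟩)
      (s := List.replicate k ⟨0, hd⟩) List.length_replicate
    rw [Measure.real, ENNReal.toReal_eq_one_iff] at h1
    exact (prob_compl_eq_zero_iff
      (measurableSet_eq_fun (measurable_pi_apply _) measurable_const)).2 h1
  refine pos_iff_ne_zero.2 fun h0 => ?_
  obtain ⟨ω, hω, hnot⟩ := (hlong.and (measure_eq_zero_iff_ae_notMem.1 h0)).exists
  exact hnot (infinite_cluster_of_forall_long_open hk _ hω)

theorem critical_curve_strict_general (d k : ℕ) (hk : 2 ≤ k)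
    (μ : ℝ → ℝ → Measure (Config d))
    (hμ : ∀ p q : ℝ, p ∈ Set.Icc (0 : ℝ) 1 → q ∈ Set.Icc (0 : ℝ) 1 →
      IsPercolation d k p q (μ p q))
    (p : ℝ) (hp : p ∈ Set.Ioo (0 : ℝ) (1 / d)) :
    (1 - d * p) / (d : ℝ) ^ k < qc d k μ p := by
  obtain ⟨hp0, hpd⟩ := hp
  have hd : 0 < d := by exact_mod_cast one_div_pos.1 (hp0.trans hpd)
  have hdp : d * p < 1 := by rwa [lt_div_iff₀' (by positivity)] at hpd
  have hp1 : p < 1 := by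
    have : (1 : ℝ) ≤ d := by exact_mod_cast hd
    nlinarith
  have hpk1 : p ^ k < 1 := pow_lt_one₀ hp0.le hp1 (by omega)
  have hpI : p ∈ Set.Icc (0 : ℝ) 1 := ⟨hp0.le, hp1.le⟩
  have hne : {q | q ∈ Set.Icc (0 : ℝ) 1 ∧
      0 < μ p q {ω | (cluster d k ω {[]}).Infinite}}.Nonempty :=
    ⟨1, ⟨zero_le_one, le_rfl⟩,
      measure_infinite_cluster_pos hd (by omega) (hμ p 1 hpI ⟨zero_le_one, le_rfl⟩)⟩
  calc (1 - d * p) / (d : ℝ) ^ k < (1 - d * p) / ((d : ℝ) ^ k * (1 - p ^ k)) :=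
        div_lt_div_of_pos_left (by linarith) (by positivity)
          (mul_lt_of_lt_one_right (by positivity) (by linarith [pow_pos hp0 k]))
    _ ≤ qc d k μ p := by
        refine le_csInf hne fun q ⟨hq, hpos⟩ => ?_
        rw [div_le_iff₀ (by positivity)]
        by_contra! hlt
        exact hpos.ne' (measure_infinite_cluster_eq_zero hk (hμ p q hpI hq) hp0.le hp1.le hq.1
          (by linarith))

/-- **Theorem 1** (de Lima–Szabó–Valesin): for every `p ∈ (0, 1/d)`,
`q_c(p) > (1 - dp)/d^k`. -/
theorem critical_curve_strict (d k : ℕ) (hd : 2 ≤ d) (hk : 2 ≤ k)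
    (μ : ℝ → ℝ → Measure (Config d))
    (hμ : ∀ p q : ℝ, p ∈ Set.Icc (0 : ℝ) 1 → q ∈ Set.Icc (0 : ℝ) 1 →
      IsPercolation d k p q (μ p q))
    (p : ℝ) (hp : p ∈ Set.Ioo (0 : ℝ) (1 / d)) :
    (1 - d * p) / (d : ℝ) ^ k < qc d k μ p :=
  critical_curve_strict_general d k hk μ hμ p hp
end

section
/- Let Z be a multi-type branching process with type set 𝒯 and offspring distribution p, let I ⊊ 𝒯 be a strict subset of the types, and let X be the multi-type branching process with the same type set 𝒯 and offspring distribution p̃, where p̃(a,·) is the law of the population obtained by sampling χ ~ p(a,·), keeping unaltered all individuals of χ whose type is not in I, and replacing each individual of χ of each type b ∈ I by an independent population sampled from p(b,·). Then for every η ∈ ℕ₀^𝒯, P(Z survives | Z_0 = η) = P(X survives | X_0 = η). -/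
open scoped ENNReal

section MTBP

variable {T : Type*} [Fintype T] [DecidableEq T]

/-- Convolution (law of an independent sum) of two population distributions. -/
noncomputable def addPMF (μ ν : PMF (T → ℕ)) : PMF (T → ℕ) :=
  μ.bind fun x => ν.map fun y => x + y

/-- Law of the sum of `n` i.i.d. populations with common law `μ`. -/
noncomputable def iidSum (μ : PMF (T → ℕ)) : ℕ → PMF (T → ℕ)
  | 0 => PMF.pure 0
  | n + 1 => addPMF μ (iidSum μ n)

/-- One generation of the multi-type branching process with offspring
distribution `p`: each of the `η a` individuals of each type `a` is replaced,
independently, by a population sampled from `p a`. -/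
noncomputable def branchStep (p : T → PMF (T → ℕ)) (η : T → ℕ) : PMF (T → ℕ) :=
  (Finset.univ : Finset T).toList.foldr
    (fun a acc => addPMF (iidSum (p a) (η a)) acc) (PMF.pure 0)

/-- The law of generation `n` of the multi-type branching process with offspring
distribution `p` started from the deterministic population `η`. -/
noncomputable def gen (p : T → PMF (T → ℕ)) (η : T → ℕ) : ℕ → PMF (T → ℕ)
  | 0 => PMF.pure η
  | n + 1 => (gen p η n).bind (branchStep p)

/-- The extinction probability of the multi-type branching process started from `η`.
Since `0` is absorbing, the events `{Z_n = 0}` increase, and the probability of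
extinction equals `⨆ n, P(Z_n = 0)`. -/
noncomputable def extinctionProb (p : T → PMF (T → ℕ)) (η : T → ℕ) : ℝ≥0∞ :=
  ⨆ n : ℕ, gen p η n 0

/-- The survival probability `P(Z survives ∣ Z_0 = η)`. -/
noncomputable def survivalProb (p : T → PMF (T → ℕ)) (η : T → ℕ) : ℝ≥0∞ :=
  1 - extinctionProb p η

/-- `e_a`, the population consisting of a single individual of type `a`. -/
def single (a : T) : T → ℕ := fun b => if b = a then 1 else 0

end MTBP

section Stmt5

variable {T : Type*} [Fintype T] [DecidableEq T]

/-- The independent sum of populations sampled from `f a`, for `a` ranging over `l`. -/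
noncomputable def sumAlong (l : List T) (f : T → PMF (T → ℕ)) : PMF (T → ℕ) :=
  l.foldr (fun a acc => addPMF (f a) acc) (PMF.pure 0)

/-- The offspring distribution `p̃` of the comparison process `X` of
Lemma 3.1 (de Lima–Szabó–Valesin): sample `χ ~ p(a,·)`, keep all individuals of `χ`
whose type is not in `I`, and replace each individual of `χ` of each type `b ∈ I`
by an independent population sampled from `p(b,·)`. -/
noncomputable def collapsedOffspring (p : T → PMF (T → ℕ)) (I : Set T)
    [DecidablePred (· ∈ I)] (a : T) : PMF (T → ℕ) :=
  (p a).bind fun χ =>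
    addPMF (PMF.pure fun b => if b ∈ I then 0 else χ b)
      (sumAlong ((Finset.univ.filter (· ∈ I)).toList) (fun b => iidSum (p b) (χ b)))

/-! Let `F = pgf p`, `F s a = E_{p a}[∏ b, s b ^ ξ b]`, be the generating-function map of `p`.
Independence gives `P(Z_n = 0 ∣ Z_0 = η) = ∏ a, (Fⁿ 0) a ^ η a`. Collapsing the types in `I`
turns `F` into `F̃ s = F (I.piecewise (F s) s)`. Along the increasing sequence `Fⁿ 0`, where
`s ≤ F s`, this yields `Fⁿ 0 ≤ F̃ⁿ 0 ≤ F²ⁿ 0`, so both extinction probabilities are the same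
supremum. -/

namespace BranchingProcess

section Expectation

variable {α β : Type*}

noncomputable def expect (μ : PMF α) (f : α → ℝ≥0∞) : ℝ≥0∞ := ∑' x, μ x * f x

lemma expect_pure (x : α) (f : α → ℝ≥0∞) : expect (PMF.pure x) f = f x := by
  rw [expect, tsum_eq_single x fun y hy => by simp [PMF.pure_apply, hy]]
  simp

lemma expect_bind (μ : PMF α) (κ : α → PMF β) (f : β → ℝ≥0∞) :
    expect (μ.bind κ) f = expect μ fun x => expect (κ x) f := by
  simp only [expect, PMF.bind_apply, ← ENNReal.tsum_mul_right, ← ENNReal.tsum_mul_left,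
    mul_assoc]
  exact ENNReal.tsum_comm

lemma expect_map (μ : PMF α) (g : α → β) (f : β → ℝ≥0∞) :
    expect (μ.map g) f = expect μ (f ∘ g) := by
  simp only [PMF.map, expect_bind, Function.comp_apply, expect_pure]
  rfl

lemma expect_mono (μ : PMF α) {f g : α → ℝ≥0∞} (h : f ≤ g) : expect μ f ≤ expect μ g :=
  ENNReal.tsum_le_tsum fun x => mul_le_mul_right (h x) _

end Expectation

variable {T : Type*} [Fintype T]

noncomputable def monomial (s : T → ℝ≥0∞) (ξ : T → ℕ) : ℝ≥0∞ := ∏ b, s b ^ ξ b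

noncomputable def pgf (p : T → PMF (T → ℕ)) (s : T → ℝ≥0∞) : T → ℝ≥0∞ :=
  fun a => expect (p a) (monomial s)

lemma monomial_add (s : T → ℝ≥0∞) (x y : T → ℕ) :
    monomial s (x + y) = monomial s x * monomial s y := by
  simp [monomial, pow_add, Finset.prod_mul_distrib]

lemma monomial_zero_right (s : T → ℝ≥0∞) : monomial s 0 = 1 := by
  simp [monomial]

lemma monomial_zero_left [DecidableEq T] (ξ : T → ℕ) :
    monomial (0 : T → ℝ≥0∞) ξ = if ξ = 0 then 1 else 0 := by
  split_ifs with h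
  · simp [h, monomial_zero_right]
  · obtain ⟨b, hb⟩ := Function.ne_iff.mp h
    exact Finset.prod_eq_zero (Finset.mem_univ b) (zero_pow hb)

lemma monomial_mono {s t : T → ℝ≥0∞} (h : s ≤ t) (ξ : T → ℕ) : monomial s ξ ≤ monomial t ξ :=
  Finset.prod_le_prod' fun b _ => pow_le_pow_left₀ zero_le (h b) _

lemma expect_monomial_zero (μ : PMF (T → ℕ)) : expect μ (monomial 0) = μ 0 := by
  classical
  rw [expect, tsum_eq_single 0 fun ξ hξ => by simp [monomial_zero_left, hξ]]
  simp [monomial_zero_left]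

lemma expect_addPMF_monomial (μ ν : PMF (T → ℕ)) (s : T → ℝ≥0∞) :
    expect (addPMF μ ν) (monomial s) = expect μ (monomial s) * expect ν (monomial s) := by
  have shift (x : T → ℕ) :
      expect (ν.map (x + ·)) (monomial s) = monomial s x * expect ν (monomial s) := by
    rw [expect_map]
    simp only [expect, Function.comp_def, monomial_add, mul_left_comm (ν _),
      ENNReal.tsum_mul_left]
  simp only [addPMF, expect_bind, shift]
  simp only [expect, ← mul_assoc, ENNReal.tsum_mul_right]

lemma expect_iidSum_monomial (μ : PMF (T → ℕ)) (n : ℕ) (s : T → ℝ≥0∞) :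
    expect (iidSum μ n) (monomial s) = expect μ (monomial s) ^ n := by
  induction n with
  | zero => simp [iidSum, expect_pure, monomial_zero_right]
  | succ n ih => rw [iidSum, expect_addPMF_monomial, ih, pow_succ']

lemma expect_sumAlong_monomial (l : List T) (f : T → PMF (T → ℕ)) (s : T → ℝ≥0∞) :
    expect (sumAlong l f) (monomial s) = (l.map fun a => expect (f a) (monomial s)).prod := by
  induction l with
  | nil => simp [sumAlong, expect_pure, monomial_zero_right]
  | cons a l ih =>
    rw [show sumAlong (a :: l) f = addPMF (f a) (sumAlong l f) from rfl,
      expect_addPMF_monomial, ih, List.map_cons, List.prod_cons]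

lemma expect_branchStep_monomial (p : T → PMF (T → ℕ)) (η : T → ℕ) (s : T → ℝ≥0∞) :
    expect (branchStep p η) (monomial s) = monomial (pgf p s) η := by
  rw [show branchStep p η = sumAlong Finset.univ.toList (fun a => iidSum (p a) (η a)) from rfl,
    expect_sumAlong_monomial]
  simp only [expect_iidSum_monomial, Finset.prod_map_toList]
  rfl

lemma expect_gen_monomial (p : T → PMF (T → ℕ)) (η : T → ℕ) (n : ℕ) (s : T → ℝ≥0∞) :
    expect (gen p η n) (monomial s) = monomial ((pgf p)^[n] s) η := by
  induction n generalizing s with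
  | zero => exact expect_pure η _
  | succ n ih =>
    simp only [gen, expect_bind, expect_branchStep_monomial]
    exact ih (pgf p s)

lemma gen_apply_zero (p : T → PMF (T → ℕ)) (η : T → ℕ) (n : ℕ) :
    gen p η n 0 = monomial ((pgf p)^[n] 0) η := by
  rw [← expect_gen_monomial, expect_monomial_zero]

lemma extinctionProb_eq_iSup (p : T → PMF (T → ℕ)) (η : T → ℕ) :
    extinctionProb p η = ⨆ n, monomial ((pgf p)^[n] 0) η := by
  simp only [extinctionProb, gen_apply_zero]

lemma pgf_mono (p : T → PMF (T → ℕ)) : Monotone (pgf p) :=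
  fun _ _ h a => expect_mono (p a) (monomial_mono h)

lemma monotone_iterate_pgf_zero (p : T → PMF (T → ℕ)) :
    Monotone fun n => (pgf p)^[n] 0 :=
  (pgf_mono p).monotone_iterate_of_le_map bot_le

lemma le_iterate_succ_pgf_zero (p : T → PMF (T → ℕ)) (n : ℕ) :
    (pgf p)^[n] 0 ≤ pgf p ((pgf p)^[n] 0) := by
  rw [← Function.iterate_succ_apply' (pgf p)]
  exact monotone_iterate_pgf_zero p n.le_succ

variable (p : T → PMF (T → ℕ)) (I : Set T) [DecidablePred (· ∈ I)]

lemma pgf_collapsedOffspring (s : T → ℝ≥0∞) :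
    pgf (collapsedOffspring p I) s = pgf p (I.piecewise (pgf p s) s) := by
  funext a
  simp only [pgf, collapsedOffspring, expect_bind]
  congr 1
  funext χ
  rw [expect_addPMF_monomial, expect_pure, expect_sumAlong_monomial]
  simp only [expect_iidSum_monomial, Finset.prod_map_toList, Finset.prod_filter, monomial,
    ← Finset.prod_mul_distrib]
  refine Finset.prod_congr rfl fun b _ => ?_
  by_cases hb : b ∈ I <;> simp [hb, pgf]

lemma pgf_le_pgf_collapsedOffspring {s : T → ℝ≥0∞} (hs : s ≤ pgf p s) :
    pgf p s ≤ pgf (collapsedOffspring p I) s := by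
  rw [pgf_collapsedOffspring]
  exact pgf_mono p (Set.le_piecewise (fun b _ => hs b) fun _ _ => le_rfl)

lemma pgf_collapsedOffspring_le {s : T → ℝ≥0∞} (hs : s ≤ pgf p s) :
    pgf (collapsedOffspring p I) s ≤ pgf p (pgf p s) := by
  rw [pgf_collapsedOffspring]
  exact pgf_mono p (Set.piecewise_le (fun _ _ => le_rfl) fun b _ => hs b)

lemma iterate_pgf_le_iterate_pgf_collapsedOffspring (n : ℕ) :
    (pgf p)^[n] 0 ≤ (pgf (collapsedOffspring p I))^[n] 0 := by
  induction n with
  | zero => rfl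
  | succ n ih =>
    simp only [Function.iterate_succ_apply']
    calc pgf p ((pgf p)^[n] 0)
        ≤ pgf (collapsedOffspring p I) ((pgf p)^[n] 0) :=
          pgf_le_pgf_collapsedOffspring p I (le_iterate_succ_pgf_zero p n)
      _ ≤ pgf (collapsedOffspring p I) ((pgf (collapsedOffspring p I))^[n] 0) :=
          pgf_mono _ ih

lemma iterate_pgf_collapsedOffspring_le_iterate_two_mul (n : ℕ) :
    (pgf (collapsedOffspring p I))^[n] 0 ≤ (pgf p)^[2 * n] 0 := by
  induction n with
  | zero => rfl
  | succ n ih =>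
    rw [Function.iterate_succ_apply', Nat.mul_succ, Function.iterate_succ_apply',
      Function.iterate_succ_apply']
    calc pgf (collapsedOffspring p I) ((pgf (collapsedOffspring p I))^[n] 0)
        ≤ pgf (collapsedOffspring p I) ((pgf p)^[2 * n] 0) := pgf_mono _ ih
      _ ≤ pgf p (pgf p ((pgf p)^[2 * n] 0)) :=
          pgf_collapsedOffspring_le p I (le_iterate_succ_pgf_zero p _)

lemma extinctionProb_collapsedOffspring (η : T → ℕ) :
    extinctionProb (collapsedOffspring p I) η = extinctionProb p η := by
  simp only [extinctionProb_eq_iSup]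
  apply le_antisymm
  · refine iSup_le fun n => le_iSup_of_le (2 * n) ?_
    exact monomial_mono (iterate_pgf_collapsedOffspring_le_iterate_two_mul p I n) η
  · exact iSup_mono fun n =>
      monomial_mono (iterate_pgf_le_iterate_pgf_collapsedOffspring p I n) η

end BranchingProcess

theorem survival_collapsed_general (p : T → PMF (T → ℕ)) (I : Set T) [DecidablePred (· ∈ I)]
    (η : T → ℕ) :
    survivalProb p η = survivalProb (collapsedOffspring p I) η := by
  rw [survivalProb, survivalProb, BranchingProcess.extinctionProb_collapsedOffspring]

/-- **Lemma 3.1** (de Lima–Szabó–Valesin): the processes `Z` (offspring distribution `p`)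
and `X` (offspring distribution `p̃`) have the same survival probability from any
initial population `η`. -/
theorem survival_collapsed (p : T → PMF (T → ℕ)) (I : Set T) [DecidablePred (· ∈ I)]
    (hI : I ⊂ Set.univ) (η : T → ℕ) :
    survivalProb p η = survivalProb (collapsedOffspring p I) η :=
  survival_collapsed_general p I η

end Stmt5
end

section
/- Let Z be a multi-type branching process with type set 𝒯 and offspring distribution p, let a⋆ ∈ 𝒯 be a distinguished type, and let λ : 𝒯 → ℕ satisfy λ(a⋆) = 1 and P(Z survives | Z_0 = e_a) ≤ P(Z survives | Z_0 = λ(a)·e_{a⋆}) for all a ∈ 𝒯. Let (Y_n)_{n≥0} be the single-type branching process with Y_0 = 1 and offspring distribution equal to the law of Σ_{a∈𝒯} λ(a)·χ(a), where χ ~ p(a⋆,·). If (Y_n) goes extinct with probability one, then Z started from Z_0 = e_{a⋆} also goes extinct with probability one. -/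
/-!
Let `f` be the offspring generating function, `f(s)_a = E[∏ b, s_b ^ χ_b]` with `χ ~ p(a,·)`.
Then `P(Z_n = 0 ∣ Z_0 = η) = ∏ a, (f^[n] 0)_a ^ η_a`, so by monotone convergence the extinction
vector `q = ⨆ n, f^[n] 0` is a fixed point of `f`, and extinction from `η` has probability
`∏ a, q_a ^ η_a`. The hypothesis on survival probabilities thus reads `q_{a⋆} ^ λ(a) ≤ q_a`,
and the generating function `φ` of `Y` satisfies
`φ(q_{a⋆}) = f((q_{a⋆} ^ λ(a))_a)_{a⋆} ≤ f(q)_{a⋆} = q_{a⋆}`.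
As `φ` is monotone, the extinction probability `⨆ n, φ^[n] 0` of `Y` is at most `q_{a⋆}`.
-/

open scoped ENNReal

section SingleType

/-- Convolution of two distributions on `ℕ` (law of an independent sum). -/
noncomputable def addPMFNat (μ ν : PMF ℕ) : PMF ℕ :=
  μ.bind fun x => ν.map fun y => x + y

/-- Law of the sum of `n` i.i.d. copies of `μ`. -/
noncomputable def iidSumNat (μ : PMF ℕ) : ℕ → PMF ℕ
  | 0 => PMF.pure 0
  | n + 1 => addPMFNat μ (iidSumNat μ n)

/-- The law of generation `n` of a single-type branching process with offspring
distribution `μ`, started from one individual. -/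
noncomputable def genNat (μ : PMF ℕ) : ℕ → PMF ℕ
  | 0 => PMF.pure 1
  | n + 1 => (genNat μ n).bind (iidSumNat μ)

/-- Extinction probability of the single-type branching process with offspring
distribution `μ` started from one individual (`0` is absorbing, so this is
`⨆ n, P(Y_n = 0)`). -/
noncomputable def extinctionProbNat (μ : PMF ℕ) : ℝ≥0∞ :=
  ⨆ n : ℕ, genNat μ n 0

end SingleType

namespace ENNReal

variable {ι : Type*} [Preorder ι] [IsDirectedOrder ι]

lemma iSup_mul_iSup_of_monotone {f g : ι → ℝ≥0∞} (hf : Monotone f) (hg : Monotone g) :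
    iSup f * iSup g = ⨆ i, f i * g i := by
  refine le_antisymm ?_ (iSup_le fun i => mul_le_mul' (le_iSup f i) (le_iSup g i))
  simp only [ENNReal.iSup_mul, ENNReal.mul_iSup]
  refine iSup₂_le fun j i => ?_
  obtain ⟨k, hik, hjk⟩ := exists_ge_ge i j
  exact le_iSup_of_le k (mul_le_mul' (hf hik) (hg hjk))

lemma finsetProd_iSup_of_monotone [Nonempty ι] {α : Type*} {s : Finset α} {f : α → ι → ℝ≥0∞}
    (hf : ∀ a, Monotone (f a)) : ∏ a ∈ s, iSup (f a) = ⨆ i, ∏ a ∈ s, f a i := by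
  classical
  induction s using Finset.induction_on with
  | empty => simp
  | insert a s ha ih =>
    simp only [Finset.prod_insert ha, ih]
    exact iSup_mul_iSup_of_monotone (hf a) fun i j hij => Finset.prod_le_prod' fun b _ => hf b hij

lemma tsum_iSup_of_monotone {α : Type*} {f : α → ι → ℝ≥0∞} (hf : ∀ a, Monotone (f a)) :
    ∑' a, iSup (f a) = ⨆ i, ∑' a, f a i := by
  simp only [ENNReal.tsum_eq_iSup_sum, ENNReal.finsetSum_iSup_of_monotone hf]
  exact iSup_comm

end ENNReal

lemma Monotone.iterate_bot_le_of_map_le {α : Type*} [Preorder α] [OrderBot α] {f : α → α}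
    (hf : Monotone f) {x : α} (hx : f x ≤ x) (n : ℕ) : f^[n] ⊥ ≤ x := by
  induction n with
  | zero => exact bot_le
  | succ n ih => exact (Function.iterate_succ_apply' f n ⊥).trans_le ((hf ih).trans hx)

namespace PMF

variable {α β : Type*}

noncomputable def expect (μ : PMF α) (g : α → ℝ≥0∞) : ℝ≥0∞ := ∑' x, μ x * g x

lemma expect_pure (a : α) (g : α → ℝ≥0∞) : (PMF.pure a).expect g = g a := by
  rw [expect, tsum_eq_single a fun b hb => by simp [hb]]
  simp

lemma expect_ite_eq [DecidableEq α] (μ : PMF α) (a : α) :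
    μ.expect (fun x => if x = a then 1 else 0) = μ a := by
  simp [expect]

lemma expect_bind (μ : PMF α) (f : α → PMF β) (g : β → ℝ≥0∞) :
    (μ.bind f).expect g = μ.expect fun a => (f a).expect g := by
  simp only [expect, bind_apply, ← ENNReal.tsum_mul_right, ← ENNReal.tsum_mul_left, mul_assoc]
  exact ENNReal.tsum_comm

lemma expect_map (μ : PMF α) (h : α → β) (g : β → ℝ≥0∞) :
    (μ.map h).expect g = μ.expect (g ∘ h) := by
  simp only [map, expect_bind, Function.comp_apply, expect_pure]
  rfl

lemma expect_mono (μ : PMF α) {g h : α → ℝ≥0∞} (hgh : g ≤ h) : μ.expect g ≤ μ.expect h :=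
  ENNReal.tsum_le_tsum fun x => mul_le_mul' le_rfl (hgh x)

lemma expect_iSup_of_monotone {ι : Type*} [Preorder ι] [IsDirectedOrder ι] (μ : PMF α)
    {g : ι → α → ℝ≥0∞} (hg : Monotone g) : μ.expect (⨆ i, g i) = ⨆ i, μ.expect (g i) := by
  simp only [expect, iSup_apply, ENNReal.mul_iSup]
  exact ENNReal.tsum_iSup_of_monotone fun x i j hij => mul_le_mul' le_rfl (hg hij x)

lemma expect_bind_map_add {M : Type*} [Add M] (μ ν : PMF M) {g : M → ℝ≥0∞}
    (hg : ∀ x y, g (x + y) = g x * g y) :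
    (μ.bind fun x => ν.map fun y => x + y).expect g = μ.expect g * ν.expect g := by
  simp only [expect_bind, expect_map, Function.comp_def, hg]
  simp only [expect, mul_left_comm _ (g _), ENNReal.tsum_mul_left, ← ENNReal.tsum_mul_right,
    mul_assoc]

noncomputable def pgf (μ : PMF ℕ) (s : ℝ≥0∞) : ℝ≥0∞ := μ.expect fun k => s ^ k

lemma pgf_mono (μ : PMF ℕ) : Monotone μ.pgf :=
  fun _ _ hst => μ.expect_mono fun k => pow_le_pow_left' hst k

lemma pgf_map_sum {T : Type*} [Fintype T] (ν : PMF (T → ℕ)) (lam : T → ℕ) (s : ℝ≥0∞) :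
    (ν.map fun χ => ∑ a, lam a * χ a).pgf s = ν.expect fun χ => ∏ a, (s ^ lam a) ^ χ a := by
  simp only [pgf, expect_map, Function.comp_def, ← pow_mul, Finset.prod_pow_eq_pow_sum]

end PMF

section MultiType

variable {T : Type*} [Fintype T]

noncomputable def offspringGF (p : T → PMF (T → ℕ)) (s : T → ℝ≥0∞) : T → ℝ≥0∞ :=
  fun a => (p a).expect fun χ => ∏ b, s b ^ χ b

lemma prod_pow_add {M : Type*} [CommMonoid M] (s : T → M) (x y : T → ℕ) :
    ∏ b, s b ^ (x + y) b = (∏ b, s b ^ x b) * ∏ b, s b ^ y b := by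
  simp only [Pi.add_apply, pow_add, Finset.prod_mul_distrib]

omit [Fintype T] in
lemma expect_iidSum (μ : PMF (T → ℕ)) {g : (T → ℕ) → ℝ≥0∞} (hg0 : g 0 = 1)
    (hg : ∀ x y, g (x + y) = g x * g y) (n : ℕ) :
    (iidSum μ n).expect g = μ.expect g ^ n := by
  induction n with
  | zero => simp [iidSum, PMF.expect_pure, hg0]
  | succ n ih => rw [iidSum, addPMF, PMF.expect_bind_map_add _ _ hg, ih, pow_succ']

lemma expect_branchStep (p : T → PMF (T → ℕ)) (η : T → ℕ) (s : T → ℝ≥0∞) :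
    (branchStep p η).expect (fun ζ => ∏ b, s b ^ ζ b) = ∏ a, offspringGF p s a ^ η a := by
  rw [branchStep, ← Finset.prod_map_toList]
  induction (Finset.univ : Finset T).toList with
  | nil => simp [PMF.expect_pure]
  | cons a l ih =>
    rw [List.foldr_cons, addPMF, PMF.expect_bind_map_add _ _ (prod_pow_add s), ih,
      expect_iidSum _ (by simp) (prod_pow_add s), List.map_cons, List.prod_cons]
    rfl

lemma expect_gen (p : T → PMF (T → ℕ)) (η : T → ℕ) (n : ℕ) (s : T → ℝ≥0∞) :
    (gen p η n).expect (fun ζ => ∏ b, s b ^ ζ b) = ∏ a, (offspringGF p)^[n] s a ^ η a := by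
  induction n generalizing s with
  | zero => simp [gen, PMF.expect_pure]
  | succ n ih =>
    simp only [gen, PMF.expect_bind, expect_branchStep, ih, Function.iterate_succ_apply]

lemma gen_apply_zero (p : T → PMF (T → ℕ)) (η : T → ℕ) (n : ℕ) :
    gen p η n 0 = ∏ a, (offspringGF p)^[n] 0 a ^ η a := by
  have hzero :
      (fun ζ : T → ℕ => ∏ b, (0 : T → ℝ≥0∞) b ^ ζ b) = fun ζ => if ζ = 0 then 1 else 0 := by
    ext ζ
    split_ifs with hζ
    · simp [hζ]
    · obtain ⟨b, hb⟩ := Function.ne_iff.mp hζ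
      exact Finset.prod_eq_zero (Finset.mem_univ b) (zero_pow hb)
  rw [← expect_gen, hzero, PMF.expect_ite_eq]

lemma offspringGF_mono (p : T → PMF (T → ℕ)) : Monotone (offspringGF p) :=
  fun _ _ hst _ => PMF.expect_mono _ fun _ =>
    Finset.prod_le_prod' fun b _ => pow_le_pow_left' (hst b) _

lemma offspringGF_iSup (p : T → PMF (T → ℕ)) {s : ℕ → T → ℝ≥0∞} (hs : Monotone s) :
    offspringGF p (⨆ n, s n) = ⨆ n, offspringGF p (s n) := by
  ext a
  have hprod : (fun χ : T → ℕ => ∏ b, (⨆ n, s n) b ^ χ b) = ⨆ n, fun χ => ∏ b, s n b ^ χ b := by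
    ext χ
    simp only [iSup_apply, ENNReal.iSup_pow]
    exact ENNReal.finsetProd_iSup_of_monotone fun b m n hmn => pow_le_pow_left' (hs hmn b) _
  rw [iSup_apply, offspringGF, hprod, PMF.expect_iSup_of_monotone]
  · rfl
  · exact fun m n hmn χ => Finset.prod_le_prod' fun b _ => pow_le_pow_left' (hs hmn b) _

noncomputable def extinctionVector (p : T → PMF (T → ℕ)) : T → ℝ≥0∞ :=
  ⨆ n, (offspringGF p)^[n] 0

lemma monotone_iterate_offspringGF (p : T → PMF (T → ℕ)) :
    Monotone fun n => (offspringGF p)^[n] 0 :=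
  (offspringGF_mono p).monotone_iterate_of_le_map fun _ => zero_le

lemma extinctionProb_eq_prod (p : T → PMF (T → ℕ)) (η : T → ℕ) :
    extinctionProb p η = ∏ a, extinctionVector p a ^ η a := by
  simp only [extinctionProb, gen_apply_zero, extinctionVector, iSup_apply, ENNReal.iSup_pow]
  refine (ENNReal.finsetProd_iSup_of_monotone fun a m n hmn => ?_).symm
  exact pow_le_pow_left' (monotone_iterate_offspringGF p hmn a) _

lemma extinctionProb_single [DecidableEq T] (p : T → PMF (T → ℕ)) (a : T) :
    extinctionProb p (single a) = extinctionVector p a := by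
  simp [extinctionProb_eq_prod, single]

lemma extinctionProb_ite [DecidableEq T] (p : T → PMF (T → ℕ)) (a : T) (k : ℕ) :
    extinctionProb p (fun b => if b = a then k else 0) = extinctionVector p a ^ k := by
  simp [extinctionProb_eq_prod, apply_ite]

lemma extinctionProb_le_one (p : T → PMF (T → ℕ)) (η : T → ℕ) : extinctionProb p η ≤ 1 :=
  iSup_le fun _ => PMF.coe_le_one _ _

lemma offspringGF_extinctionVector (p : T → PMF (T → ℕ)) :
    offspringGF p (extinctionVector p) = extinctionVector p := by
  rw [extinctionVector, offspringGF_iSup p (monotone_iterate_offspringGF p),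
    ← (monotone_iterate_offspringGF p).iSup_nat_add 1]
  simp only [Function.iterate_succ_apply']

end MultiType

section SingleTypeExtinction

lemma expect_iidSumNat (μ : PMF ℕ) (s : ℝ≥0∞) (n : ℕ) :
    (iidSumNat μ n).expect (fun k => s ^ k) = μ.pgf s ^ n := by
  induction n with
  | zero => simp [iidSumNat, PMF.expect_pure]
  | succ n ih =>
    rw [iidSumNat, addPMFNat, PMF.expect_bind_map_add _ _ (pow_add s), ih, PMF.pgf, pow_succ']

lemma expect_genNat (μ : PMF ℕ) (n : ℕ) (s : ℝ≥0∞) :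
    (genNat μ n).expect (fun k => s ^ k) = μ.pgf^[n] s := by
  induction n generalizing s with
  | zero => simp [genNat, PMF.expect_pure]
  | succ n ih =>
    simp only [genNat, PMF.expect_bind, expect_iidSumNat, ih, Function.iterate_succ_apply]

lemma genNat_apply_zero (μ : PMF ℕ) (n : ℕ) : genNat μ n 0 = μ.pgf^[n] 0 := by
  rw [← expect_genNat, ← PMF.expect_ite_eq]
  simp only [zero_pow_eq]

end SingleTypeExtinction

section

variable {T : Type*} [Fintype T] [DecidableEq T]

theorem extinction_comparison_general (p : T → PMF (T → ℕ)) (astar : T) (lam : T → ℕ)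
    (hmono : ∀ a : T,
      survivalProb p (single a) ≤
        survivalProb p (fun b => if b = astar then lam a else 0))
    (hY : extinctionProbNat ((p astar).map fun χ => ∑ a : T, lam a * χ a) = 1) :
    extinctionProb p (single astar) = 1 := by
  set q := extinctionVector p
  have hq : ∀ a, q astar ^ lam a ≤ q a := fun a => by
    have h := (ENNReal.sub_le_sub_iff_left (extinctionProb_le_one p _) ENNReal.one_ne_top).mp
      (hmono a)
    rwa [extinctionProb_single, extinctionProb_ite] at h
  have hpgf : ((p astar).map fun χ => ∑ a : T, lam a * χ a).pgf (q astar) ≤ q astar :=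
    calc _ = offspringGF p (fun a => q astar ^ lam a) astar := PMF.pgf_map_sum _ _ _
      _ ≤ offspringGF p q astar := offspringGF_mono p hq astar
      _ = q astar := congrFun (offspringGF_extinctionVector p) astar
  refine le_antisymm (extinctionProb_le_one p _) ?_
  rw [← hY, extinctionProb_single]
  exact iSup_le fun n =>
    (genNat_apply_zero _ n).trans_le ((PMF.pgf_mono _).iterate_bot_le_of_map_le hpgf n)

/-- **Lemma 3.2** (de Lima–Szabó–Valesin). Let `a⋆` be a distinguished type and
`λ : 𝒯 → ℕ` with `λ(a⋆) = 1` be such that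
`P(Z survives ∣ Z_0 = e_a) ≤ P(Z survives ∣ Z_0 = λ(a)·e_{a⋆})` for all `a`.
Let `(Y_n)` be the single-type branching process with offspring distribution the law of
`Σ_a λ(a)·χ(a)`, `χ ~ p(a⋆,·)`.  If `(Y_n)` goes extinct a.s., then `Z` started from
`e_{a⋆}` goes extinct a.s. -/
theorem extinction_comparison (p : T → PMF (T → ℕ)) (astar : T) (lam : T → ℕ)
    (hlam : lam astar = 1)
    (hmono : ∀ a : T,
      survivalProb p (single a) ≤
        survivalProb p (fun b => if b = astar then lam a else 0))
    (hY : extinctionProbNat ((p astar).map fun χ => ∑ a : T, lam a * χ a) = 1) :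
    extinctionProb p (single astar) = 1 :=
  extinction_comparison_general p astar lam hmono hY

end
end

section
/- Let Z be a multi-type branching process with type set 𝒯, offspring distribution p, and mean offspring matrix M, satisfying (⋆) and (P). Let a⋆ ∈ 𝒯 and I ⊂ 𝒯 \ {a⋆}, and assume Z_0 = e_{a⋆}. If M(a⋆, a⋆) + Σ_{a ∈ I} M(a⋆, a)·M(a, a⋆) > 1, then Z survives with positive probability. -/
open scoped ENNReal

section MeanMatrix

variable {T : Type*} [Fintype T] [DecidableEq T]

/-- The mean offspring matrix `M(a,b) = E[Z_1(b) ∣ Z_0 = e_a]`. -/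
noncomputable def meanMatrix (p : T → PMF (T → ℕ)) : Matrix T T ℝ≥0∞ :=
  Matrix.of fun a b => ∑' η : T → ℕ, p a η * (η b : ℝ≥0∞)

/-- Condition (⋆): some type has positive probability of producing a population with
more than one individual. -/
def CondStar (p : T → PMF (T → ℕ)) : Prop :=
  ∃ (a : T) (η : T → ℕ), p a η ≠ 0 ∧ 1 < ∑ b : T, η b

/-- Condition (P): some power of the mean offspring matrix has all entries positive. -/
def CondPos (p : T → PMF (T → ℕ)) : Prop :=
  ∃ n : ℕ, ∀ a b : T, 0 < ((meanMatrix p) ^ n) a b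

end MeanMatrix

/-!
Write `G(s) a = pgf (p a) s` for the offspring generating function. If `s ≤ 1` and `G(s) ≤ s`,
then conditioning on the first generation gives `P_η(Z_n = 0) ≤ s ^ η` for every `n`, so the
extinction probability from `e_a` is at most `s a`.

If `v ≥ 0` and `v < M v` on the support of `v`, then `s = 1 - ε v` is such a point for small
`ε > 0`: from `1 - ∏ b, (1 - x b) ^ ζ b ≥ t / (1 + t)` with `t = ∑ b, ζ b * x b` one gets
`1 - G(1 - ε v) a ≥ ε u / (1 + O(ε))` for every `u < (M v) a`, also when `(M v) a = ∞`.

Here `v = e_{a⋆} + w`, where `w` lives on `I`, `w a < M(a, a⋆)` wherever `w a ≠ 0`, and still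
`M(a⋆, a⋆) + ∑ a ∈ I, M(a⋆, a) * w a > 1`. Then `(M v) a⋆ > 1 = v a⋆`, and
`(M v) a ≥ M(a, a⋆) > w a` for `a ∈ I`.
-/

open Filter Topology
open scoped NNReal Matrix

lemma PMF.tsum_bind_mul {α β : Type*} (μ : PMF α) (f : α → PMF β) (g : β → ℝ≥0∞) :
    ∑' b, μ.bind f b * g b = ∑' a, μ a * ∑' b, f a b * g b := by
  simp_rw [PMF.bind_apply, ← ENNReal.tsum_mul_right, ← ENNReal.tsum_mul_left, mul_assoc]
  exact ENNReal.tsum_comm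

lemma Matrix.sum_mul_le_mulVec {m n α : Type*} [Fintype n] [NonUnitalNonAssocSemiring α]
    [PartialOrder α] [CanonicallyOrderedAdd α] (M : Matrix m n α) (v : n → α) (i : m)
    (s : Finset n) : ∑ j ∈ s, M i j * v j ≤ (M *ᵥ v) i :=
  Finset.sum_le_sum_of_subset (Finset.subset_univ s)

lemma ENNReal.exists_nnreal_lt_of_lt_add_sum_mul {ι : Type*} (I : Finset ι) {c x : ℝ≥0∞}
    {y z : ι → ℝ≥0∞} (h : c < x + ∑ i ∈ I, y i * z i) :
    ∃ w : ι → ℝ≥0, (∀ i, w i ≠ 0 → (w i : ℝ≥0∞) < z i) ∧ c < x + ∑ i ∈ I, y i * w i := by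
  -- Truncate `z` at a level `n` to make it finite, then shrink it by a factor `θ < 1`.
  have htrunc : ∑ i ∈ I, y i * z i = ⨆ n : ℕ, ∑ i ∈ I, y i * (z i ⊓ n) := by
    rw [← ENNReal.finsetSum_iSup_of_monotone fun i m n hmn => by gcongr]
    refine Finset.sum_congr rfl fun i _ => ?_
    rw [← ENNReal.mul_iSup, ← inf_iSup_eq, ENNReal.iSup_natCast, inf_top_eq]
  obtain ⟨n, hn⟩ := lt_iSup_iff.1 (by rwa [htrunc, ENNReal.add_iSup] at h)
  set Z : ι → ℝ≥0 := fun i => (z i ⊓ n).toNNReal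
  have hZ : ∀ i, (Z i : ℝ≥0∞) = z i ⊓ n := fun i =>
    ENNReal.coe_toNNReal (ne_top_of_le_ne_top (ENNReal.natCast_ne_top n) inf_le_right)
  simp_rw [← hZ] at hn
  set S := ∑ i ∈ I, y i * Z i
  have hθ : ∀ᶠ θ : ℝ≥0 in 𝓝[<] 1, c < x + θ * S := by
    have hlim : Tendsto (fun θ : ℝ≥0 => x + θ * S) (𝓝[<] 1) (𝓝 (x + (1 : ℝ≥0) * S)) :=
      tendsto_const_nhds.add (ENNReal.Tendsto.mul_const
        (ENNReal.tendsto_coe.2 nhdsWithin_le_nhds) (Or.inl one_ne_zero))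
    exact hlim.eventually_const_lt (by simpa using hn)
  have : (𝓝[<] (1 : ℝ≥0)).NeBot := nhdsLT_neBot_of_exists_lt ⟨0, one_pos⟩
  obtain ⟨θ, hθc, hθ1⟩ := (hθ.and self_mem_nhdsWithin).exists
  refine ⟨fun i => θ * Z i, fun i hi => ?_, ?_⟩
  · calc ((θ * Z i : ℝ≥0) : ℝ≥0∞) < Z i := ENNReal.coe_lt_coe.2 <|
          mul_lt_of_lt_one_left (pos_of_ne_zero (right_ne_zero_of_mul hi)) hθ1
      _ ≤ z i := by rw [hZ]; exact inf_le_left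
  · simpa [S, Finset.mul_sum, mul_left_comm] using hθc

section BranchingProcess

variable {T : Type*} [Fintype T]

noncomputable def multiPow (s : T → ℝ≥0∞) (ζ : T → ℕ) : ℝ≥0∞ := ∏ b, s b ^ ζ b

noncomputable def pgf (μ : PMF (T → ℕ)) (s : T → ℝ≥0∞) : ℝ≥0∞ := ∑' ζ, μ ζ * multiPow s ζ

@[simp]
lemma multiPow_zero (s : T → ℝ≥0∞) : multiPow s 0 = 1 := by simp [multiPow]

lemma multiPow_add (s : T → ℝ≥0∞) (ζ ξ : T → ℕ) :
    multiPow s (ζ + ξ) = multiPow s ζ * multiPow s ξ := by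
  simp [multiPow, pow_add, Finset.prod_mul_distrib]

lemma multiPow_single [DecidableEq T] (s : T → ℝ≥0∞) (a : T) : multiPow s (single a) = s a := by
  rw [multiPow, Finset.prod_eq_single a (fun b _ hb => by simp [single, hb]) (by simp)]
  simp [single]

lemma multiPow_mono {s t : T → ℝ≥0∞} (hst : s ≤ t) (ζ : T → ℕ) : multiPow s ζ ≤ multiPow t ζ :=
  Finset.prod_le_prod' fun b _ => pow_le_pow_left' (hst b) _

lemma multiPow_le_one {s : T → ℝ≥0∞} (hs : s ≤ 1) (ζ : T → ℕ) : multiPow s ζ ≤ 1 := by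
  simpa [multiPow] using multiPow_mono hs ζ

lemma multiPow_ofReal {x : T → ℝ} (hx : ∀ b, 0 ≤ x b) (ζ : T → ℕ) :
    multiPow (fun b => ENNReal.ofReal (x b)) ζ = ENNReal.ofReal (∏ b, x b ^ ζ b) := by
  rw [ENNReal.ofReal_prod_of_nonneg fun b _ => pow_nonneg (hx b) _]
  exact Finset.prod_congr rfl fun b _ => (ENNReal.ofReal_pow (hx b) _).symm

lemma pgf_pure (ζ : T → ℕ) (s : T → ℝ≥0∞) : pgf (PMF.pure ζ) s = multiPow s ζ := by
  rw [pgf, tsum_eq_single ζ fun ξ hξ => by simp [PMF.pure_apply, hξ]]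
  simp

lemma pgf_bind (μ : PMF (T → ℕ)) (f : (T → ℕ) → PMF (T → ℕ)) (s : T → ℝ≥0∞) :
    pgf (μ.bind f) s = ∑' ξ, μ ξ * pgf (f ξ) s :=
  PMF.tsum_bind_mul μ f _

lemma pgf_addPMF (μ ν : PMF (T → ℕ)) (s : T → ℝ≥0∞) :
    pgf (addPMF μ ν) s = pgf μ s * pgf ν s := by
  simp only [addPMF, pgf_bind, PMF.map, Function.comp_def, pgf_pure, multiPow_add]
  simp_rw [pgf, ← ENNReal.tsum_mul_right, ← ENNReal.tsum_mul_left]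
  exact tsum_congr fun ξ => tsum_congr fun ζ => by ring

lemma pgf_iidSum (μ : PMF (T → ℕ)) (s : T → ℝ≥0∞) (n : ℕ) :
    pgf (iidSum μ n) s = pgf μ s ^ n := by
  induction n with
  | zero => simp [iidSum, pgf_pure]
  | succ n ih => rw [iidSum, pgf_addPMF, ih, pow_succ']

lemma pgf_branchStep (p : T → PMF (T → ℕ)) (η : T → ℕ) (s : T → ℝ≥0∞) :
    pgf (branchStep p η) s = multiPow (fun a => pgf (p a) s) η := by
  rw [branchStep, multiPow, ← Finset.prod_map_toList]
  induction (Finset.univ : Finset T).toList with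
  | nil => simp [pgf_pure]
  | cons a L ih => simp [pgf_addPMF, pgf_iidSum, ih]

lemma pgf_le_one (μ : PMF (T → ℕ)) {s : T → ℝ≥0∞} (hs : s ≤ 1) : pgf μ s ≤ 1 :=
  calc pgf μ s ≤ ∑' ζ, μ ζ := ENNReal.tsum_le_tsum fun ζ =>
          mul_le_of_le_one_right' (multiPow_le_one hs ζ)
    _ = 1 := μ.tsum_coe

lemma gen_succ_eq_bind_branchStep (p : T → PMF (T → ℕ)) (η : T → ℕ) (n : ℕ) :
    gen p η (n + 1) = (branchStep p η).bind fun ζ => gen p ζ n := by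
  induction n generalizing η with
  | zero => simp [gen]
  | succ n ih => rw [gen, ih, PMF.bind_bind]; rfl

lemma gen_apply_zero_le_multiPow {p : T → PMF (T → ℕ)} {s : T → ℝ≥0∞}
    (hs : ∀ a, pgf (p a) s ≤ s a) (n : ℕ) (η : T → ℕ) : gen p η n 0 ≤ multiPow s η := by
  induction n generalizing η with
  | zero =>
    by_cases hη : η = 0
    · simp [gen, hη]
    · simp [gen, PMF.pure_apply, Ne.symm hη]
  | succ n ih =>
    calc gen p η (n + 1) 0 = ∑' ζ, branchStep p η ζ * gen p ζ n 0 := by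
          rw [gen_succ_eq_bind_branchStep, PMF.bind_apply]
      _ ≤ pgf (branchStep p η) s := ENNReal.tsum_le_tsum fun ζ => mul_le_mul_right (ih ζ) _
      _ = multiPow (fun a => pgf (p a) s) η := pgf_branchStep p η s
      _ ≤ multiPow s η := multiPow_mono hs η

lemma extinctionProb_le_multiPow {p : T → PMF (T → ℕ)} {s : T → ℝ≥0∞}
    (hs : ∀ a, pgf (p a) s ≤ s a) (η : T → ℕ) : extinctionProb p η ≤ multiPow s η :=
  iSup_le fun n => gen_apply_zero_le_multiPow hs n η

lemma div_one_add_le_one_sub_prod_pow {x : T → ℝ} (hx0 : ∀ b, 0 ≤ x b) (hx1 : ∀ b, x b ≤ 1)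
    (ζ : T → ℕ) :
    (∑ b, ζ b * x b) / (1 + ∑ b, ζ b * x b) ≤ 1 - ∏ b, (1 - x b) ^ ζ b := by
  set t := ∑ b, (ζ b : ℝ) * x b
  have ht : 0 ≤ t := Finset.sum_nonneg fun b _ => mul_nonneg (Nat.cast_nonneg _) (hx0 b)
  have hprod : ∏ b, (1 - x b) ^ ζ b ≤ Real.exp (-t) :=
    calc ∏ b, (1 - x b) ^ ζ b ≤ ∏ b, Real.exp (-x b) ^ ζ b :=
          Finset.prod_le_prod (fun b _ => pow_nonneg (sub_nonneg.2 (hx1 b)) _)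
            fun b _ => pow_le_pow_left₀ (sub_nonneg.2 (hx1 b)) (Real.one_sub_le_exp_neg _) _
      _ = Real.exp (-t) := by
          simp_rw [← Real.exp_nat_mul, ← Real.exp_sum]
          simp [t, Finset.sum_neg_distrib]
  have hexp : Real.exp (-t) ≤ (1 + t)⁻¹ := by
    rw [Real.exp_neg]
    exact inv_anti₀ (by positivity) (by linarith [Real.add_one_le_exp t])
  calc t / (1 + t) = 1 - (1 + t)⁻¹ := by field_simp; ring
    _ ≤ 1 - ∏ b, (1 - x b) ^ ζ b := by linarith

lemma ofReal_div_le_one_sub_multiPow {x : T → ℝ} (hx0 : ∀ b, 0 ≤ x b) (hx1 : ∀ b, x b ≤ 1)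
    {ζ : T → ℕ} {K : ℝ} (hK : ∑ b, ζ b * x b ≤ K) :
    ENNReal.ofReal ((∑ b, ζ b * x b) / (1 + K)) ≤
      1 - multiPow (fun b => ENNReal.ofReal (1 - x b)) ζ := by
  have hprod : 0 ≤ ∏ b, (1 - x b) ^ ζ b :=
    Finset.prod_nonneg fun b _ => pow_nonneg (sub_nonneg.2 (hx1 b)) _
  have hsum : 0 ≤ ∑ b, (ζ b : ℝ) * x b :=
    Finset.sum_nonneg fun b _ => mul_nonneg (Nat.cast_nonneg _) (hx0 b)
  rw [multiPow_ofReal fun b => sub_nonneg.2 (hx1 b), ← ENNReal.ofReal_one,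
    ← ENNReal.ofReal_sub _ hprod]
  refine ENNReal.ofReal_le_ofReal (le_trans ?_ (div_one_add_le_one_sub_prod_pow hx0 hx1 ζ))
  exact div_le_div_of_nonneg_left hsum (by positivity) (by linarith)

lemma pgf_le_one_sub {μ : PMF (T → ℕ)} {s : T → ℝ≥0∞} (hs : s ≤ 1) {r : ℝ≥0∞}
    (hr : r ≤ ∑' ζ, μ ζ * (1 - multiPow s ζ)) : pgf μ s ≤ 1 - r := by
  have hsplit : pgf μ s + ∑' ζ, μ ζ * (1 - multiPow s ζ) = 1 := by
    rw [pgf, ← ENNReal.tsum_add]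
    refine (tsum_congr fun ζ => ?_).trans μ.tsum_coe
    rw [← mul_add, add_tsub_cancel_of_le (multiPow_le_one hs ζ), mul_one]
  calc pgf μ s ≤ 1 - ∑' ζ, μ ζ * (1 - multiPow s ζ) :=
        ENNReal.le_sub_of_add_le_right (ne_top_of_le_ne_top ENNReal.one_ne_top
          (le_add_self.trans hsplit.le)) hsplit.le
    _ ≤ 1 - r := tsub_le_tsub_left hr 1

lemma tsum_mul_sum_eq_meanMatrix_mulVec (p : T → PMF (T → ℕ)) (a : T) (w : T → ℝ≥0∞) :
    ∑' ζ, p a ζ * ∑ b, (ζ b : ℝ≥0∞) * w b = (meanMatrix p *ᵥ w) a := by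
  simp_rw [Finset.mul_sum, ← mul_assoc]
  rw [Summable.tsum_finsetSum fun b _ => ENNReal.summable]
  simp_rw [ENNReal.tsum_mul_right]
  rfl

lemma pgf_le_one_sub_sum {x : T → ℝ} (hx0 : ∀ b, 0 ≤ x b) (hx1 : ∀ b, x b ≤ 1)
    (μ : PMF (T → ℕ)) (F : Finset (T → ℕ)) {K : ℝ} (hK : ∀ ζ ∈ F, ∑ b, ζ b * x b ≤ K) :
    pgf μ (fun b => ENNReal.ofReal (1 - x b)) ≤
      1 - ∑ ζ ∈ F, μ ζ * ENNReal.ofReal ((∑ b, ζ b * x b) / (1 + K)) := by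
  refine pgf_le_one_sub (fun b => ENNReal.ofReal_le_one.2 (sub_le_self 1 (hx0 b))) ?_
  refine le_trans (Finset.sum_le_sum fun ζ hζ => ?_) (ENNReal.sum_le_tsum F)
  exact mul_le_mul_right (ofReal_div_le_one_sub_multiPow hx0 hx1 (hK ζ hζ)) _

lemma eventually_pgf_le_one_sub_mul (μ : PMF (T → ℕ)) (v : T → ℝ≥0) (u : ℝ≥0)
    (hu : (u : ℝ≥0∞) < ∑' ζ, μ ζ * ∑ b, (ζ b : ℝ≥0∞) * v b) :
    ∀ᶠ ε in 𝓝[>] (0 : ℝ),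
      pgf μ (fun b => ENNReal.ofReal (1 - ε * v b)) ≤ ENNReal.ofReal (1 - ε * u) := by
  set W : (T → ℕ) → ℝ≥0 := fun ζ => ∑ b, (ζ b : ℝ≥0) * v b
  have hWcoe : ∀ ζ, (W ζ : ℝ≥0∞) = ∑ b, (ζ b : ℝ≥0∞) * v b := fun ζ => by simp [W]
  have hWε : ∀ ε ζ, ∑ b, (ζ b : ℝ) * (ε * v b) = ε * W ζ := fun ε ζ => by
    simp only [W, NNReal.coe_sum, NNReal.coe_mul, NNReal.coe_natCast, Finset.mul_sum]
    exact Finset.sum_congr rfl fun b _ => by ring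
  simp_rw [← hWcoe] at hu
  -- On a finite set `F` of populations `W` is bounded by some `K`, which makes the lower bound
  -- `ε W / (1 + ε W) ≤ 1 - (1 - ε v) ^ ζ` uniformly linear in `ε W`.
  obtain ⟨F, hF⟩ : ∃ F : Finset (T → ℕ), (u : ℝ≥0∞) < ∑ ζ ∈ F, μ ζ * W ζ :=
    lt_iSup_iff.1 (ENNReal.tsum_eq_iSup_sum ▸ hu)
  obtain ⟨r, hur, hrF⟩ := ENNReal.lt_iff_exists_nnreal_btwn.1 hF
  set K : ℝ := ∑ ζ ∈ F, (W ζ : ℝ)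
  have hWK : ∀ ζ ∈ F, (W ζ : ℝ) ≤ K := fun ζ hζ =>
    Finset.single_le_sum (fun ζ _ => (W ζ).coe_nonneg) hζ
  have hsmall : ∀ᶠ ε in 𝓝 (0 : ℝ), (1 + ε * K) * u < r ∧ ∀ b, ε * v b ≤ 1 := by
    refine ((by fun_prop : Continuous fun ε : ℝ => (1 + ε * K) * u).tendsto' 0 u (by simp)
      |>.eventually_lt_const (by exact_mod_cast ENNReal.coe_lt_coe.1 hur)).and
      (eventually_all.2 fun b => ?_)
    exact (by fun_prop : Continuous fun ε : ℝ => ε * v b).tendsto' 0 0 (by simp)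
      |>.eventually_le_const zero_lt_one
  filter_upwards [nhdsWithin_le_nhds hsmall, self_mem_nhdsWithin] with ε ⟨hεK, hεv⟩ (hε : 0 < ε)
  have hbound := pgf_le_one_sub_sum (fun b => by positivity) hεv μ F (K := ε * K)
    fun ζ hζ => hWε ε ζ ▸ mul_le_mul_of_nonneg_left (hWK ζ hζ) hε.le
  refine hbound.trans ?_
  rw [ENNReal.ofReal_sub _ (by positivity), ENNReal.ofReal_one]
  refine tsub_le_tsub_left ?_ 1
  calc ENNReal.ofReal (ε * u) ≤ ENNReal.ofReal (ε / (1 + ε * K)) * r := by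
        rw [← ENNReal.ofReal_coe_nnreal, ← ENNReal.ofReal_mul (by positivity)]
        refine ENNReal.ofReal_le_ofReal ?_
        rw [div_mul_eq_mul_div, le_div_iff₀ (by positivity)]
        nlinarith
    _ ≤ ENNReal.ofReal (ε / (1 + ε * K)) * ∑ ζ ∈ F, μ ζ * W ζ := by gcongr
    _ = _ := by
        rw [Finset.mul_sum]
        refine Finset.sum_congr rfl fun ζ _ => ?_
        rw [hWε, mul_div_right_comm, ENNReal.ofReal_mul (by positivity),
          ENNReal.ofReal_coe_nnreal]
        ring

theorem survivalProb_pos_of_lt_mulVec [DecidableEq T] (p : T → PMF (T → ℕ)) (v : T → ℝ≥0)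
    (a : T) (ha : v a ≠ 0)
    (hv : ∀ b, v b ≠ 0 → (v b : ℝ≥0∞) < (meanMatrix p *ᵥ fun c => (v c : ℝ≥0∞)) b) :
    0 < survivalProb p (single a) := by
  have hpgf : ∀ᶠ ε in 𝓝[>] (0 : ℝ), ∀ b,
      pgf (p b) (fun c => ENNReal.ofReal (1 - ε * v c)) ≤ ENNReal.ofReal (1 - ε * v b) := by
    refine eventually_all.2 fun b => ?_
    by_cases hb : v b = 0
    · filter_upwards [self_mem_nhdsWithin] with ε (hε : 0 < ε)
      rw [hb, NNReal.coe_zero, mul_zero, sub_zero, ENNReal.ofReal_one]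
      exact pgf_le_one _ fun c => ENNReal.ofReal_le_one.2 (sub_le_self 1 (by positivity))
    · refine eventually_pgf_le_one_sub_mul (p b) v (v b) ?_
      rw [tsum_mul_sum_eq_meanMatrix_mulVec]
      exact hv b hb
  obtain ⟨ε, hext, hε⟩ := (hpgf.and self_mem_nhdsWithin).exists
  have hlt : ENNReal.ofReal (1 - ε * v a) < 1 := ENNReal.ofReal_lt_one.2 <|
    sub_lt_self 1 (mul_pos hε (NNReal.coe_pos.2 (pos_iff_ne_zero.2 ha)))
  refine tsub_pos_of_lt ((extinctionProb_le_multiPow hext (single a)).trans_lt ?_)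
  rwa [multiPow_single]

end BranchingProcess

theorem survival_of_mean_gt_one_general {T : Type*} [Fintype T] [DecidableEq T]
    (p : T → PMF (T → ℕ))
    (astar : T) (I : Finset T) (hI : astar ∉ I)
    (hmean : 1 < meanMatrix p astar astar +
      ∑ a ∈ I, meanMatrix p astar a * meanMatrix p a astar) :
    0 < survivalProb p (single astar) := by
  obtain ⟨w, hw, hlt⟩ := ENNReal.exists_nnreal_lt_of_lt_add_sum_mul I hmean
  set v : T → ℝ≥0 := fun b => if b = astar then 1 else if b ∈ I then w b else 0
  have hv_astar : v astar = 1 := if_pos rfl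
  have hv_I : ∀ a ∈ I, v a = w a := fun a ha => by simp [v, ha, ne_of_mem_of_not_mem ha hI]
  refine survivalProb_pos_of_lt_mulVec p v astar (by simp [hv_astar]) fun b hb => ?_
  by_cases hba : b = astar
  · rw [hba]
    calc (v astar : ℝ≥0∞) = 1 := by simp [hv_astar]
      _ < meanMatrix p astar astar * v astar + ∑ a ∈ I, meanMatrix p astar a * v a := by
          rw [Finset.sum_congr rfl fun a ha => by rw [hv_I a ha], hv_astar, ENNReal.coe_one,
            mul_one]
          exact hlt
      _ = ∑ c ∈ insert astar I, meanMatrix p astar c * v c := by rw [Finset.sum_insert hI]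
      _ ≤ _ := Matrix.sum_mul_le_mulVec _ _ astar _
  · have hbI : b ∈ I := by
      by_contra hbI
      simp [v, hba, hbI] at hb
    calc (v b : ℝ≥0∞) = w b := by rw [hv_I b hbI]
      _ < meanMatrix p b astar := hw b (hv_I b hbI ▸ hb)
      _ = ∑ c ∈ {astar}, meanMatrix p b c * v c := by simp [hv_astar]
      _ ≤ _ := Matrix.sum_mul_le_mulVec _ _ b _

/-- **Lemma 3.3(a)** (de Lima–Szabó–Valesin). Let `Z` be a multi-type branching process
satisfying (⋆) and (P), let `a⋆` be a type and `I ⊆ 𝒯 \ {a⋆}`.  If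
`M(a⋆,a⋆) + Σ_{a ∈ I} M(a⋆,a)·M(a,a⋆) > 1`, then `Z` started from `e_{a⋆}` survives
with positive probability. -/
theorem survival_of_mean_gt_one {T : Type*} [Fintype T] [DecidableEq T]
    (p : T → PMF (T → ℕ)) (hstar : CondStar p) (hpos : CondPos p)
    (astar : T) (I : Finset T) (hI : astar ∉ I)
    (hmean : 1 < meanMatrix p astar astar +
      ∑ a ∈ I, meanMatrix p astar a * meanMatrix p a astar) :
    0 < survivalProb p (single astar) :=
  survival_of_mean_gt_one_general p astar I hI hmean
end

section
/- Let B ⊂ V be admissible. Then: (i) every equivalence class B' ∈ ℬ^B is admissible; and (ii) the full subtrees V^{b(B')}, as B' ranges over ℬ^B, are pairwise disjoint and each is disjoint from C_s^B. -/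
open MeasureTheory ProbabilityTheory Filter

/-- One open *short* edge step from `v` to `w`. -/
def shortStep (d : ℕ) (ω : Config d) (v w : Vert d) : Prop :=
  ∃ s : List (Fin d), s.length = 1 ∧ w = v ++ s ∧ ω (v, s) = true

/-- `C_s^B`: the short cluster of `B`, i.e. all vertices reachable from `B` by oriented
open paths using only short edges (with `B ⊆ C_s^B`). -/
def shortCluster (d : ℕ) (ω : Config d) (B : Set (Vert d)) : Set (Vert d) :=
  {w | ∃ v ∈ B, Relation.ReflTransGen (shortStep d ω) v w}

/-- `C_ℓ^B`: the vertices outside `C_s^B` which are endpoints of open long edges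
starting in `C_s^B`. -/
def longCluster (d k : ℕ) (ω : Config d) (B : Set (Vert d)) : Set (Vert d) :=
  {w | w ∉ shortCluster d ω B ∧ ∃ v ∈ shortCluster d ω B,
    ∃ s : List (Fin d), s.length = k ∧ w = v ++ s ∧ ω (v, s) = true}

/-- `V^v`: the full subtree rooted at `v`. -/
def subtree {d : ℕ} (v : Vert d) : Set (Vert d) := {w | ∃ s : List (Fin d), w = v ++ s}

/-- `V_Γ^v`: the subtree of height `k - 1` rooted at `v`. -/
def gammaSet (d k : ℕ) (v : Vert d) : Set (Vert d) :=
  {w | ∃ s : List (Fin d), s.length < k ∧ w = v ++ s}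

/-- A set `B` of vertices is admissible if `B ⊆ V_Γ^u` for some (necessarily unique)
`u ∈ B`, called the base of `B`. -/
def Admissible (d k : ℕ) (B : Set (Vert d)) : Prop :=
  ∃ u ∈ B, B ⊆ gammaSet d k u

/-- The base `b(B)` of an admissible set `B`. -/
noncomputable def base (d k : ℕ) (B : Set (Vert d)) : Vert d :=
  haveI := Classical.dec (Admissible d k B)
  if h : Admissible d k B then h.choose else []

/-- The relation on `C_ℓ^B`: `u` and `v` are related iff there is `w ∈ C_ℓ^B` with
`u, v ∈ V^w` (for admissible `B` this is an equivalence relation on `C_ℓ^B`). -/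
def longRel (d k : ℕ) (ω : Config d) (B : Set (Vert d)) (u v : Vert d) : Prop :=
  u ∈ longCluster d k ω B ∧ v ∈ longCluster d k ω B ∧
    ∃ w ∈ longCluster d k ω B, u ∈ subtree w ∧ v ∈ subtree w

/-- `ℬ^B`: the collection of equivalence classes of `C_ℓ^B` under `longRel`. -/
def longClasses (d k : ℕ) (ω : Config d) (B : Set (Vert d)) : Set (Set (Vert d)) :=
  {S | ∃ u ∈ longCluster d k ω B, S = {v | longRel d k ω B u v}}

/-- The type `t(B)` of an admissible set `B`: the set of words that must be concatenated
with the base of `B` to produce `B`. -/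
noncomputable def typeOf (d k : ℕ) (B : Set (Vert d)) : Set (Vert d) :=
  {v | v ∈ gammaSet d k ([] : Vert d) ∧ base d k B ++ v ∈ B}

/-- `𝒜`: the set of types, i.e. admissible sets based at the root. -/
def typeSpace (d k : ℕ) : Set (Set (Vert d)) :=
  {A | ([] : Vert d) ∈ A ∧ A ⊆ gammaSet d k ([] : Vert d)}


/-!
A short open path only extends words, and every intermediate prefix lies on it; so above
the height of `B` the short cluster `C_s^B` is closed under prefixes. A long-cluster vertex
is at least `k` levels above `B`, hence never a prefix of a short-cluster vertex. Each class
of `ℬ^B` is the part of `C_ℓ^B` in the subtree of a prefix-minimal vertex `m` of `C_ℓ^B`, and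
it stays within `k` levels of `m`, because the long edge reaching one of its vertices starts
in `C_s^B`, which cannot lie in `V^m`. Distinct prefix-minimal vertices have disjoint
subtrees.
-/

namespace TreePercolation

variable {d k : ℕ} {ω : Config d} {B : Set (Vert d)}

lemma mem_subtree_iff {v w : Vert d} : w ∈ subtree v ↔ v <+: w :=
  ⟨fun ⟨s, hs⟩ => ⟨s, hs.symm⟩, fun ⟨s, hs⟩ => ⟨s, hs.symm⟩⟩

lemma mem_subtree_self (v : Vert d) : v ∈ subtree v :=
  ⟨[], (List.append_nil v).symm⟩

lemma prefix_of_mem_gammaSet {u v : Vert d} (hv : v ∈ gammaSet d k u) : u <+: v :=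
  let ⟨s, _, hs⟩ := hv; ⟨s, hs.symm⟩

lemma base_eq_of_mem_of_subset_gammaSet {A : Set (Vert d)} {u : Vert d} (hu : u ∈ A)
    (hA : A ⊆ gammaSet d k u) : base d k A = u := by
  have hadm : Admissible d k A := ⟨u, hu, hA⟩
  obtain ⟨hu', hA'⟩ := hadm.choose_spec
  rw [base, dif_pos hadm]
  exact (prefix_of_mem_gammaSet (hA' hu)).eq_of_length_le
    (prefix_of_mem_gammaSet (hA hu')).length_le

lemma prefix_of_reflTransGen_shortStep {v w : Vert d}
    (h : Relation.ReflTransGen (shortStep d ω) v w) : v <+: w := by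
  induction h with
  | refl => exact List.prefix_refl v
  | tail _ hstep ih =>
    obtain ⟨s, -, rfl, -⟩ := hstep
    exact ih.trans (List.prefix_append _ s)

lemma reflTransGen_shortStep_of_prefix {v z : Vert d}
    (h : Relation.ReflTransGen (shortStep d ω) v z) {w : Vert d} (hvw : v <+: w)
    (hwz : w <+: z) : Relation.ReflTransGen (shortStep d ω) v w := by
  induction h generalizing w with
  | refl => rw [hwz.eq_of_length_le hvw.length_le]
  | @tail y z hvy hstep ih =>
    obtain ⟨s, hs, rfl, hopen⟩ := hstep
    by_cases hlen : w.length ≤ y.length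
    · exact ih hvw (List.prefix_of_prefix_length_le hwz (List.prefix_append y s) hlen)
    · have hw : w = y ++ s :=
        hwz.eq_of_length (le_antisymm hwz.length_le (by simp only [List.length_append, hs]; omega))
      exact hw ▸ hvy.tail ⟨s, hs, rfl, hopen⟩

lemma mem_shortCluster_of_prefix {w z : Vert d} (hz : z ∈ shortCluster d ω B)
    (hwz : w <+: z) (hB : ∀ b ∈ B, b.length ≤ w.length) : w ∈ shortCluster d ω B := by
  obtain ⟨b, hb, hbz⟩ := hz
  have hbw := List.prefix_of_prefix_length_le (prefix_of_reflTransGen_shortStep hbz) hwz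
    (hB b hb)
  exact ⟨b, hb, reflTransGen_shortStep_of_prefix hbz hbw hwz⟩

lemma exists_length_add_le_of_mem_longCluster {x : Vert d} (hx : x ∈ longCluster d k ω B) :
    ∃ b ∈ B, b <+: x ∧ b.length + k ≤ x.length := by
  obtain ⟨-, v, ⟨b, hb, hbv⟩, s, hs, rfl, -⟩ := hx
  have hbv := prefix_of_reflTransGen_shortStep hbv
  refine ⟨b, hb, hbv.trans (List.prefix_append v s), ?_⟩
  simp only [List.length_append, hs]
  exact Nat.add_le_add_right hbv.length_le k

lemma not_prefix_of_mem_longCluster_of_mem_shortCluster {u m z : Vert d}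
    (hB : B ⊆ gammaSet d k u) (hm : m ∈ longCluster d k ω B) (hz : z ∈ shortCluster d ω B) :
    ¬ m <+: z := by
  intro hmz
  obtain ⟨b₀, hb₀, -, hlen⟩ := exists_length_add_le_of_mem_longCluster hm
  have hu := (prefix_of_mem_gammaSet (hB hb₀)).length_le
  refine hm.1 (mem_shortCluster_of_prefix hz hmz fun b hb => ?_)
  obtain ⟨s, hs, rfl⟩ := hB hb
  simp only [List.length_append]
  omega

lemma disjoint_subtree_shortCluster {u m : Vert d} (hB : B ⊆ gammaSet d k u)
    (hm : m ∈ longCluster d k ω B) : Disjoint (subtree m) (shortCluster d ω B) :=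
  Set.disjoint_left.2 fun _ hz hzs =>
    not_prefix_of_mem_longCluster_of_mem_shortCluster hB hm hzs (mem_subtree_iff.1 hz)

lemma longCluster_inter_subtree_subset_gammaSet {u m : Vert d} (hB : B ⊆ gammaSet d k u)
    (hm : m ∈ longCluster d k ω B) : longCluster d k ω B ∩ subtree m ⊆ gammaSet d k m := by
  rintro _ ⟨⟨-, v, hv, s, hs, heq, -⟩, t, rfl⟩
  have hvm : v.length < m.length := by
    by_contra! hle
    exact not_prefix_of_mem_longCluster_of_mem_shortCluster hB hm hv
      (List.prefix_of_prefix_length_le ⟨t, rfl⟩ ⟨s, heq.symm⟩ hle)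
  have hlen := congrArg List.length heq
  simp only [List.length_append] at hlen
  exact ⟨t, by omega, rfl⟩

def IsLongRoot (d k : ℕ) (ω : Config d) (B : Set (Vert d)) (m : Vert d) : Prop :=
  m ∈ longCluster d k ω B ∧ ∀ w ∈ longCluster d k ω B, w <+: m → w = m

lemma exists_isLongRoot_prefix {x : Vert d} (hx : x ∈ longCluster d k ω B) :
    ∃ m, IsLongRoot d k ω B m ∧ m <+: x := by
  obtain ⟨m, ⟨hm, hmx⟩, hmin⟩ := (measure List.length).wf.has_min
    {w | w ∈ longCluster d k ω B ∧ w <+: x} ⟨x, hx, List.prefix_refl x⟩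
  refine ⟨m, ⟨hm, fun w hw hwm => hwm.eq_of_length ?_⟩, hmx⟩
  exact le_antisymm hwm.length_le (not_lt.1 (hmin w ⟨hw, hwm.trans hmx⟩))

lemma IsLongRoot.eq_of_prefix {m₁ m₂ z : Vert d} (h₁ : IsLongRoot d k ω B m₁)
    (h₂ : IsLongRoot d k ω B m₂) (hz₁ : m₁ <+: z) (hz₂ : m₂ <+: z) : m₁ = m₂ := by
  rcases List.prefix_or_prefix_of_prefix hz₁ hz₂ with h | h
  · exact h₂.2 m₁ h₁.1 h
  · exact (h₁.2 m₂ h₂.1 h).symm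

lemma IsLongRoot.disjoint_subtree {m₁ m₂ : Vert d} (h₁ : IsLongRoot d k ω B m₁)
    (h₂ : IsLongRoot d k ω B m₂) (hne : m₁ ≠ m₂) : Disjoint (subtree m₁) (subtree m₂) :=
  Set.disjoint_left.2 fun _ hz₁ hz₂ =>
    hne (h₁.eq_of_prefix h₂ (mem_subtree_iff.1 hz₁) (mem_subtree_iff.1 hz₂))

lemma exists_isLongRoot_of_mem_longClasses {S : Set (Vert d)} (hS : S ∈ longClasses d k ω B) :
    ∃ m, IsLongRoot d k ω B m ∧ S = longCluster d k ω B ∩ subtree m := by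
  obtain ⟨x, hx, rfl⟩ := hS
  obtain ⟨m, hm, hmx⟩ := exists_isLongRoot_prefix hx
  refine ⟨m, hm, Set.ext fun v => ⟨?_, ?_⟩⟩
  · rintro ⟨-, hv, w, hw, hxw, hvw⟩
    rw [mem_subtree_iff] at hxw hvw
    obtain ⟨m', hm', hm'w⟩ := exists_isLongRoot_prefix hw
    have hmw : m <+: w := hm.eq_of_prefix hm' hmx (hm'w.trans hxw) ▸ hm'w
    exact ⟨hv, mem_subtree_iff.2 (hmw.trans hvw)⟩
  · rintro ⟨hv, hmv⟩
    exact ⟨hx, hv, m, hm.1, mem_subtree_iff.2 hmx, hmv⟩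

end TreePercolation

open TreePercolation

theorem longClasses_admissible_and_disjoint_general (d k : ℕ)
    (ω : Config d) (B : Set (Vert d)) (hB : Admissible d k B) :
    (∀ B' ∈ longClasses d k ω B, Admissible d k B') ∧
    (∀ B' ∈ longClasses d k ω B, ∀ B'' ∈ longClasses d k ω B, B' ≠ B'' →
      Disjoint (subtree (base d k B')) (subtree (base d k B''))) ∧
    (∀ B' ∈ longClasses d k ω B,
      Disjoint (subtree (base d k B')) (shortCluster d ω B)) := by
  obtain ⟨u, -, hB⟩ := hB
  have hgamma {m} (hm : m ∈ longCluster d k ω B) :=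
    longCluster_inter_subtree_subset_gammaSet hB hm
  have hbase {m} (hm : m ∈ longCluster d k ω B) :
      base d k (longCluster d k ω B ∩ subtree m) = m :=
    base_eq_of_mem_of_subset_gammaSet ⟨hm, mem_subtree_self m⟩ (hgamma hm)
  refine ⟨fun S hS => ?_, fun S₁ hS₁ S₂ hS₂ hne => ?_, fun S hS => ?_⟩
  · obtain ⟨m, hm, rfl⟩ := exists_isLongRoot_of_mem_longClasses hS
    exact ⟨m, ⟨hm.1, mem_subtree_self m⟩, hgamma hm.1⟩
  · obtain ⟨m₁, hm₁, rfl⟩ := exists_isLongRoot_of_mem_longClasses hS₁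
    obtain ⟨m₂, hm₂, rfl⟩ := exists_isLongRoot_of_mem_longClasses hS₂
    rw [hbase hm₁.1, hbase hm₂.1]
    exact hm₁.disjoint_subtree hm₂ fun h => hne (h ▸ rfl)
  · obtain ⟨m, hm, rfl⟩ := exists_isLongRoot_of_mem_longClasses hS
    rw [hbase hm.1]
    exact disjoint_subtree_shortCluster hB hm.1

/-- **Lemma 3.6** (de Lima–Szabó–Valesin).  For any admissible set `B`:
(i) every equivalence class `B' ∈ ℬ^B` is admissible, and
(ii) the subtrees `V^{b(B')}`, `B' ∈ ℬ^B`, are pairwise disjoint and disjoint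
from `C_s^B`. -/
theorem longClasses_admissible_and_disjoint (d k : ℕ) (hd : 2 ≤ d) (hk : 2 ≤ k)
    (ω : Config d) (B : Set (Vert d)) (hB : Admissible d k B) :
    (∀ B' ∈ longClasses d k ω B, Admissible d k B') ∧
    (∀ B' ∈ longClasses d k ω B, ∀ B'' ∈ longClasses d k ω B, B' ≠ B'' →
      Disjoint (subtree (base d k B')) (subtree (base d k B''))) ∧
    (∀ B' ∈ longClasses d k ω B,
      Disjoint (subtree (base d k B')) (shortCluster d ω B)) :=
  longClasses_admissible_and_disjoint_general d k ω B hB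
end

section
/- Fix p, d with pd < 1 and s ∈ ℝ, and for each k set q = (1−pd)/d^k + s/d^{2k}. If k is large enough, then for every A ∈ 𝒜, Σ_{A'} M(A, A')·|A'| ≤ 2|A|. -/
open MeasureTheory ProbabilityTheory Filter

open scoped ENNReal
open MeasureTheory in
/-- The mean offspring matrix of the exploration branching process:
`M(A, A') = E[#{B' ∈ ℬ^B : t(B') = A'}]` for `B` an admissible set of type `A`
(we take the canonical representative `B = A`, which is admissible with base the root). -/
noncomputable def meanOffspring (d k : ℕ) (μ : Measure (Config d))
    (A A' : Set (Vert d)) : ℝ≥0∞ :=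
  ∫⁻ ω, ({B' | B' ∈ longClasses d k ω A ∧ typeOf d k B' = A'}.encard : ℕ∞) ∂μ

open MeasureTheory in
/-- `M̄(A)`: the expected number of vertices `v ∈ C_ℓ^{{o}}` such that
`C_ℓ^{{o}} ∩ V^v ⊇ {v·u : u ∈ A}`. -/
noncomputable def meanUpper (d k : ℕ) (μ : Measure (Config d))
    (A : Set (Vert d)) : ℝ≥0∞ :=
  ∫⁻ ω, ({v | v ∈ longCluster d k ω {([] : Vert d)} ∧
      ∀ u ∈ A, v ++ u ∈ longCluster d k ω {([] : Vert d)}}.encard : ℕ∞) ∂μ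

/-- The height `h(A) = sup_{v ∈ A} h(v)` of a set of vertices. -/
noncomputable def heightSet {d : ℕ} (A : Set (Vert d)) : ℕ :=
  sSup (List.length '' A)

/-- The parametrization `q = (1-pd)/d^k + s/d^{2k}` of Section 3.3. -/
noncomputable def qparam (d : ℕ) (p s : ℝ) (k : ℕ) : ℝ :=
  (1 - p * d) / (d : ℝ) ^ k + s / (d : ℝ) ^ (2 * k)

/-!
The row sum `Σ_{A'} M(A, A') |A'|` is at most `E|C_ℓ^A|`: the classes in `ℬ^A` are disjoint
subsets of `C_ℓ^A`, and a class of type `A'` contains a translate of `A'`.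
Each vertex of `C_ℓ^A` is `u·w·s` with `u ∈ A`, all short edges from `u` to `u·w` open and the
long edge `s` from `u·w` open, so a union bound over `(u, w, s)` gives
`E|C_ℓ^A| ≤ |A| · Σ_w p^|w| · d^k q = |A| · d^k q / (1 - pd)`.
For the given `q`, `d^k q = (1 - pd) + s / d^k ≤ 2 (1 - pd)` as soon as `d^k ≥ |s| / (1 - pd)`.
-/

theorem tsum_lintegral_le_lintegral_tsum {α ι : Type*} [MeasurableSpace α] (μ : Measure α)
    (f : ι → α → ℝ≥0∞) : ∑' i, ∫⁻ a, f i a ∂μ ≤ ∫⁻ a, ∑' i, f i a ∂μ := by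
  choose g hg hgf hfg using fun i => exists_measurable_le_lintegral_eq μ (f i)
  rw [ENNReal.tsum_eq_iSup_sum]
  refine iSup_le fun t => ?_
  calc ∑ i ∈ t, ∫⁻ a, f i a ∂μ = ∫⁻ a, ∑ i ∈ t, g i a ∂μ := by
        rw [lintegral_finsetSum t fun i _ => hg i]
        exact Finset.sum_congr rfl fun i _ => hfg i
    _ ≤ ∫⁻ a, ∑' i, f i a ∂μ := lintegral_mono fun a =>
        (Finset.sum_le_sum fun i _ => hgf i a).trans (ENNReal.sum_le_tsum t)

theorem ProbabilityTheory.iIndepFun.measure_forall_mem_eq_true {Ω ι : Type*}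
    [MeasurableSpace Ω] {μ : Measure Ω} {X : ι → Ω → Bool} (hX : iIndepFun X μ)
    {l : List ι} (hl : l.Nodup) :
    μ {ω | ∀ i ∈ l, X i ω = true} = (l.map fun i => μ {ω | X i ω = true}).prod := by
  classical
  have hset : {ω | ∀ i ∈ l, X i ω = true} = ⋂ i ∈ l.toFinset, X i ⁻¹' {true} := by
    ext ω
    simp
  rw [hset, hX.measure_inter_preimage_eq_mul _ fun _ _ => measurableSet_singleton true,
    List.prod_toFinset _ hl]
  rfl

theorem tsum_encard_fiber_mul_le {α β : Type*} (S : Set α) (T : Set β) (t : α → β)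
    (g : β → ℝ≥0∞) :
    ∑' b : T, ({a | a ∈ S ∧ t a = b}.encard : ℝ≥0∞) * g b ≤ ∑' a : S, g (t a) := by
  calc ∑' b : T, ({a | a ∈ S ∧ t a = b}.encard : ℝ≥0∞) * g b
      = ∑' (b : T) (a : {a | a ∈ S ∧ t a = b}), g (t a) := by
        refine tsum_congr fun b => ?_
        rw [← ENNReal.tsum_set_const]
        exact tsum_congr fun a => by rw [a.2.2]
    _ = ∑' x : (Σ b : T, {a | a ∈ S ∧ t a = b}), g (t x.2) :=
        (ENNReal.tsum_sigma' fun x : Σ b : T, {a | a ∈ S ∧ t a = b} => g (t x.2)).symm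
    _ ≤ ∑' a : S, g (t a) := by
        refine ENNReal.tsum_comp_le_tsum_of_injective
          (f := fun x : (Σ b : T, {a | a ∈ S ∧ t a = b}) => (⟨x.2, x.2.2.1⟩ : S))
          ?_ (fun a : S => g (t a))
        rintro ⟨b, a, ha⟩ ⟨b', a', ha'⟩ h
        simp only [Subtype.mk.injEq] at h
        subst h
        obtain rfl : b = b' := Subtype.ext (ha.2.symm.trans ha'.2)
        rfl

theorem tsum_encard_eq_encard_sUnion {α : Type*} {C : Set (Set α)} (hC : C.PairwiseDisjoint id) :
    ∑' S : C, (S.1.encard : ℝ≥0∞) = (⋃₀ C).encard := by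
  have h := ENNReal.tsum_biUnion' (f := fun _ : α => (1 : ℝ≥0∞)) hC
  simp only [id, ENNReal.tsum_set_one, ← Set.sUnion_eq_biUnion] at h
  exact h.symm

theorem measurableSet_setOf_forall_mem_eq_true {ι : Type*} (l : List ι) :
    MeasurableSet {ω : ι → Bool | ∀ i ∈ l, ω i = true} := by
  have h : {ω : ι → Bool | ∀ i ∈ l, ω i = true} = ⋂ i ∈ {i | i ∈ l}, (· i) ⁻¹' {true} := by
    ext ω
    simp
  rw [h]
  exact .biInter l.finite_toSet.countable fun i _ =>
    measurable_pi_apply i (measurableSet_singleton true)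

theorem tsum_pow_length (d : ℕ) (x : ℝ≥0∞) :
    ∑' w : List (Fin d), x ^ w.length = (1 - d * x)⁻¹ := by
  rw [← List.equivSigmaTuple.symm.tsum_eq, ENNReal.tsum_sigma', ← ENNReal.tsum_geometric]
  refine tsum_congr fun n => ?_
  simp [List.equivSigmaTuple, mul_pow]

section LongClasses

variable {d k : ℕ} {ω : Config d} {B : Set (Vert d)}

theorem longRel_symm {u v : Vert d} (h : longRel d k ω B u v) : longRel d k ω B v u := by
  obtain ⟨hu, hv, w, hw, huw, hvw⟩ := h
  exact ⟨hv, hu, w, hw, hvw, huw⟩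

theorem longRel_trans {u v x : Vert d} (huv : longRel d k ω B u v)
    (hvx : longRel d k ω B v x) : longRel d k ω B u x := by
  obtain ⟨hu, -, w₁, hw₁, huw₁, t₁, rfl⟩ := huv
  obtain ⟨-, hx, w₂, hw₂, ⟨t₂, ht₂⟩, hxw₂⟩ := hvx
  -- `w₁` and `w₂` are both prefixes of `v`, so one lies in the subtree of the other.
  rcases List.prefix_or_prefix_of_prefix ⟨t₁, rfl⟩ ⟨t₂, ht₂.symm⟩ with ⟨r, rfl⟩ | ⟨r, rfl⟩
  · obtain ⟨t₃, rfl⟩ := hxw₂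
    exact ⟨hu, hx, w₁, hw₁, huw₁, r ++ t₃, by simp⟩
  · obtain ⟨t₃, rfl⟩ := huw₁
    exact ⟨hu, hx, w₂, hw₂, ⟨r ++ t₃, by simp⟩, hxw₂⟩

theorem longClasses_pairwiseDisjoint : (longClasses d k ω B).PairwiseDisjoint id := by
  rintro _ ⟨u, -, rfl⟩ _ ⟨u', -, rfl⟩ hne
  refine Set.disjoint_left.2 fun x hx hx' => hne ?_
  ext v
  exact ⟨longRel_trans (longRel_trans hx' (longRel_symm hx)),
    longRel_trans (longRel_trans hx (longRel_symm hx'))⟩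

theorem sUnion_longClasses_subset : ⋃₀ longClasses d k ω B ⊆ longCluster d k ω B := by
  rintro x ⟨_, ⟨u, -, rfl⟩, hx⟩
  exact hx.2.1

end LongClasses

theorem encard_typeOf_le (d k : ℕ) (B : Set (Vert d)) : (typeOf d k B).encard ≤ B.encard :=
  Set.encard_le_encard_of_injOn (fun _ hv => hv.2) fun _ _ _ _ h => List.append_cancel_left h

theorem tsum_encard_longClasses_typeOf_mul_le (d k : ℕ) (ω : Config d) (A : Set (Vert d)) :
    ∑' A' : {A' : Set (Vert d) // A' ∈ typeSpace d k},
        (({B' | B' ∈ longClasses d k ω A ∧ typeOf d k B' = A'.1}.encard : ℕ∞) : ℝ≥0∞) *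
          ((A'.1.encard : ℕ∞) : ℝ≥0∞) ≤
      (longCluster d k ω A).encard := by
  calc _ ≤ ∑' B' : longClasses d k ω A, ((typeOf d k B').encard : ℝ≥0∞) :=
        tsum_encard_fiber_mul_le _ (typeSpace d k) (typeOf d k) fun A' => (A'.encard : ℝ≥0∞)
    _ ≤ ∑' B' : longClasses d k ω A, (B'.1.encard : ℝ≥0∞) :=
        ENNReal.tsum_le_tsum fun B' => by exact_mod_cast encard_typeOf_le d k B'
    _ = (⋃₀ longClasses d k ω A).encard := tsum_encard_eq_encard_sUnion longClasses_pairwiseDisjoint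
    _ ≤ (longCluster d k ω A).encard := by
        exact_mod_cast Set.encard_le_encard sUnion_longClasses_subset

section Paths

variable {d : ℕ}

def pathEdges : Vert d → List (Fin d) → List (Vert d × List (Fin d))
  | _, [] => []
  | u, a :: w => (u, [a]) :: pathEdges (u ++ [a]) w

theorem exists_pathEdges_open_of_reflTransGen {ω : Config d} {u v : Vert d}
    (h : Relation.ReflTransGen (shortStep d ω) u v) :
    ∃ w, v = u ++ w ∧ ∀ e ∈ pathEdges u w, ω e = true := by
  induction h using Relation.ReflTransGen.head_induction_on with
  | refl => exact ⟨[], by simp, by simp [pathEdges]⟩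
  | head hstep _ ih =>
    obtain ⟨w, rfl, hw⟩ := ih
    obtain ⟨s, hs, rfl, hopen⟩ := hstep
    obtain ⟨a, rfl⟩ := List.length_eq_one_iff.1 hs
    exact ⟨a :: w, by simp, List.forall_mem_cons.2 ⟨hopen, hw⟩⟩

theorem length_pathEdges (u w : Vert d) : (pathEdges u w).length = w.length := by
  induction w generalizing u with
  | nil => rfl
  | cons a w ih => simp [pathEdges, ih]

theorem length_snd_of_mem_pathEdges {u w : Vert d} {e : Vert d × List (Fin d)}
    (he : e ∈ pathEdges u w) : e.2.length = 1 := by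
  induction w generalizing u with
  | nil => simp [pathEdges] at he
  | cons a w ih =>
    rcases List.mem_cons.1 he with rfl | he
    · rfl
    · exact ih he

theorem length_le_of_mem_pathEdges {u w : Vert d} {e : Vert d × List (Fin d)}
    (he : e ∈ pathEdges u w) : u.length ≤ e.1.length := by
  induction w generalizing u with
  | nil => simp [pathEdges] at he
  | cons a w ih =>
    rcases List.mem_cons.1 he with rfl | he
    · rfl
    · have := ih he
      simp only [List.length_append, List.length_singleton] at this
      omega

theorem nodup_pathEdges (u w : Vert d) : (pathEdges u w).Nodup := by
  induction w generalizing u with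
  | nil => exact List.nodup_nil
  | cons a w ih =>
    refine List.nodup_cons.2 ⟨fun h => ?_, ih _⟩
    simpa using length_le_of_mem_pathEdges h

/-- The edges that must be open for `u ++ w ++ s` to be reached from `u` by a short path
followed by the long edge `s`. -/
def longPathEdges (u w s : Vert d) : List (Vert d × List (Fin d)) :=
  (u ++ w, s) :: pathEdges u w

theorem nodup_longPathEdges {k : ℕ} (hk : k ≠ 1) (u w : Vert d) {s : Vert d}
    (hs : s.length = k) : (longPathEdges u w s).Nodup :=
  List.nodup_cons.2 ⟨fun h => hk (hs ▸ length_snd_of_mem_pathEdges h), nodup_pathEdges u w⟩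

end Paths

namespace IsPercolation

variable {d k : ℕ} {p q : ℝ} {μ : Measure (Config d)}

theorem measure_short (hμ : IsPercolation d k p q μ) {v s : Vert d} (hs : s.length = 1) :
    μ {ω | ω (v, s) = true} = ENNReal.ofReal p := by
  have := hμ.1
  rw [← hμ.2.2.1 v s hs, ENNReal.ofReal_toReal (measure_ne_top μ _)]

theorem measure_long (hμ : IsPercolation d k p q μ) {v s : Vert d} (hs : s.length = k) :
    μ {ω | ω (v, s) = true} = ENNReal.ofReal q := by
  have := hμ.1
  rw [← hμ.2.2.2 v s hs, ENNReal.ofReal_toReal (measure_ne_top μ _)]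

theorem measure_longPathEdges_open (hμ : IsPercolation d k p q μ) (hk : k ≠ 1)
    (u w : Vert d) {s : Vert d} (hs : s.length = k) :
    μ {ω | ∀ e ∈ longPathEdges u w s, ω e = true} =
      ENNReal.ofReal q * ENNReal.ofReal p ^ w.length := by
  rw [hμ.2.1.measure_forall_mem_eq_true (nodup_longPathEdges hk u w hs), longPathEdges,
    List.map_cons, List.prod_cons, hμ.measure_long hs, List.prod_eq_pow_card _ (ENNReal.ofReal p),
    List.length_map, length_pathEdges]
  simp only [List.mem_map]
  rintro _ ⟨e, he, rfl⟩
  exact hμ.measure_short (length_snd_of_mem_pathEdges he)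

end IsPercolation

section LongCluster

variable {d k : ℕ}

theorem encard_longCluster_le_tsum (ω : Config d) (B : Set (Vert d)) :
    ((longCluster d k ω B).encard : ℝ≥0∞) ≤ ∑' i : B × Vert d × List.Vector (Fin d) k,
      {ω | ∀ e ∈ longPathEdges i.1.1 i.2.1 i.2.2.toList, ω e = true}.indicator 1 ω := by
  set I := {i : B × Vert d × List.Vector (Fin d) k |
    ∀ e ∈ longPathEdges i.1.1 i.2.1 i.2.2.toList, ω e = true}
  have hsub : longCluster d k ω B ⊆ (fun i => i.1.1 ++ i.2.1 ++ i.2.2.toList) '' I := by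
    rintro _ ⟨-, v, ⟨u, hu, huv⟩, s, hs, rfl, hopen⟩
    obtain ⟨w, rfl, hw⟩ := exists_pathEdges_open_of_reflTransGen huv
    exact ⟨(⟨u, hu⟩, w, ⟨s, hs⟩), List.forall_mem_cons.2 ⟨hopen, hw⟩, rfl⟩
  calc ((longCluster d k ω B).encard : ℝ≥0∞) ≤ I.encard := by
        exact_mod_cast (Set.encard_le_encard hsub).trans (Set.encard_image_le _ _)
    _ = ∑' i, I.indicator 1 i := by rw [← ENNReal.tsum_set_one, ← tsum_subtype]; rfl
    _ = _ := by simp only [Set.indicator_apply, I, Set.mem_ofPred_eq, Pi.one_apply]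

theorem tsum_ofReal_mul_pow_length (B : Set (Vert d)) (p q : ℝ) :
    ∑' i : B × Vert d × List.Vector (Fin d) k, ENNReal.ofReal q * ENNReal.ofReal p ^ i.2.1.length =
      B.encard * ((1 - d * ENNReal.ofReal p)⁻¹ * (d ^ k * ENNReal.ofReal q)) := by
  simp only [ENNReal.tsum_prod', ENNReal.tsum_const, ENNReal.tsum_mul_left, tsum_pow_length,
    ENat.card_coe_set_eq, ENat.card_eq_coe_fintype_card, card_vector, Fintype.card_fin]
  push_cast
  ring

theorem IsPercolation.lintegral_encard_longCluster_le {p q : ℝ} {μ : Measure (Config d)}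
    (hμ : IsPercolation d k p q μ) (hk : k ≠ 1) (B : Set (Vert d)) :
    ∫⁻ ω, ((longCluster d k ω B).encard : ℝ≥0∞) ∂μ ≤
      B.encard * ((1 - d * ENNReal.ofReal p)⁻¹ * (d ^ k * ENNReal.ofReal q)) := by
  have hmeas (i : B × Vert d × List.Vector (Fin d) k) :=
    measurableSet_setOf_forall_mem_eq_true (longPathEdges i.1.1 i.2.1 i.2.2.toList)
  calc ∫⁻ ω, ((longCluster d k ω B).encard : ℝ≥0∞) ∂μ
      ≤ ∫⁻ ω, ∑' i : B × Vert d × List.Vector (Fin d) k,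
          {ω | ∀ e ∈ longPathEdges i.1.1 i.2.1 i.2.2.toList, ω e = true}.indicator 1 ω ∂μ :=
        lintegral_mono (encard_longCluster_le_tsum · B)
    _ = ∑' i : B × Vert d × List.Vector (Fin d) k,
          ENNReal.ofReal q * ENNReal.ofReal p ^ i.2.1.length := by
        rw [lintegral_tsum fun i => (measurable_one.indicator (hmeas i)).aemeasurable]
        refine tsum_congr fun i => ?_
        rw [lintegral_indicator_one (hmeas i)]
        exact hμ.measure_longPathEdges_open hk _ _ i.2.2.toList_length
    _ = _ := tsum_ofReal_mul_pow_length B p q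

end LongCluster

theorem IsPercolation.tsum_meanOffspring_mul_encard_le {d k : ℕ} {p q : ℝ}
    {μ : Measure (Config d)} (hμ : IsPercolation d k p q μ) (hk : k ≠ 1) (A : Set (Vert d)) :
    ∑' A' : {A' : Set (Vert d) // A' ∈ typeSpace d k},
        meanOffspring d k μ A A'.1 * ((A'.1.encard : ℕ∞) : ℝ≥0∞) ≤
      A.encard * ((1 - d * ENNReal.ofReal p)⁻¹ * (d ^ k * ENNReal.ofReal q)) :=
  calc _ ≤ ∑' A' : {A' : Set (Vert d) // A' ∈ typeSpace d k},
        ∫⁻ ω, (({B' | B' ∈ longClasses d k ω A ∧ typeOf d k B' = A'.1}.encard : ℕ∞) : ℝ≥0∞) *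
          ((A'.1.encard : ℕ∞) : ℝ≥0∞) ∂μ :=
        ENNReal.tsum_le_tsum fun _ => lintegral_mul_const_le _ _
    _ ≤ ∫⁻ ω, ∑' A' : {A' : Set (Vert d) // A' ∈ typeSpace d k},
        (({B' | B' ∈ longClasses d k ω A ∧ typeOf d k B' = A'.1}.encard : ℕ∞) : ℝ≥0∞) *
          ((A'.1.encard : ℕ∞) : ℝ≥0∞) ∂μ :=
        tsum_lintegral_le_lintegral_tsum μ _
    _ ≤ ∫⁻ ω, ((longCluster d k ω A).encard : ℝ≥0∞) ∂μ :=
        lintegral_mono fun ω => tsum_encard_longClasses_typeOf_mul_le d k ω A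
    _ ≤ _ := hμ.lintegral_encard_longCluster_le hk A

theorem pow_mul_qparam {d : ℕ} (hd : d ≠ 0) (p s : ℝ) (k : ℕ) :
    (d : ℝ) ^ k * qparam d p s k = 1 - p * d + s / (d : ℝ) ^ k := by
  have : (d : ℝ) ^ k ≠ 0 := pow_ne_zero k (Nat.cast_ne_zero.2 hd)
  rw [qparam, pow_mul', sq]
  field_simp

theorem qparam_mem_Icc_and_pow_mul_le {d : ℕ} {p s : ℝ} {k : ℕ} (hd : d ≠ 0)
    (hc : 1 - p * d ≤ 1) (hx : 2 ≤ (d : ℝ) ^ k) (hs : |s| ≤ (1 - p * d) * (d : ℝ) ^ k) :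
    qparam d p s k ∈ Set.Icc 0 1 ∧ (d : ℝ) ^ k * qparam d p s k ≤ 2 * (1 - p * d) := by
  have hx0 : 0 < (d : ℝ) ^ k := by linarith
  have hsx : |s / (d : ℝ) ^ k| ≤ 1 - p * d := by
    rw [abs_div, abs_of_pos hx0, div_le_iff₀ hx0]
    exact hs
  have hq := pow_mul_qparam hd p s k
  have hq0 : 0 ≤ (d : ℝ) ^ k * qparam d p s k := by
    rw [hq]
    linarith [neg_abs_le (s / (d : ℝ) ^ k)]
  have hq2 : (d : ℝ) ^ k * qparam d p s k ≤ 2 * (1 - p * d) := by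
    rw [hq]
    linarith [le_abs_self (s / (d : ℝ) ^ k)]
  exact ⟨⟨nonneg_of_mul_nonneg_right hq0 hx0, by nlinarith⟩, hq2⟩

theorem inv_one_sub_mul_pow_mul_le_two {d k : ℕ} {p q : ℝ} (hp : 0 ≤ p) (hpd : p * d < 1)
    (hq : (d : ℝ) ^ k * q ≤ 2 * (1 - p * d)) :
    (1 - d * ENNReal.ofReal p)⁻¹ * (d ^ k * ENNReal.ofReal q) ≤ 2 := by
  have hd : (0 : ℝ) ≤ d := Nat.cast_nonneg d
  have hc : ENNReal.ofReal (1 - p * d) = 1 - d * ENNReal.ofReal p := by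
    rw [ENNReal.ofReal_sub _ (by positivity), ENNReal.ofReal_one, ENNReal.ofReal_mul hp,
      ENNReal.ofReal_natCast, mul_comm]
  have hx : (d : ℝ≥0∞) ^ k * ENNReal.ofReal q = ENNReal.ofReal ((d : ℝ) ^ k * q) := by
    rw [ENNReal.ofReal_mul (by positivity), ENNReal.ofReal_pow hd, ENNReal.ofReal_natCast]
  rw [← hc, hx, ENNReal.inv_mul_le_iff (by simpa using hpd) ENNReal.ofReal_ne_top,
    ← ENNReal.ofReal_ofNat 2, ← ENNReal.ofReal_mul (by linarith)]
  exact ENNReal.ofReal_le_ofReal (by linarith)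

/-- **Lemma 3.8** (de Lima–Szabó–Valesin): under the parametrization
`q = (1-pd)/d^k + s/d^{2k}`, if `k` is large enough then for every type `A ∈ 𝒜`,
`Σ_{A'} M(A, A')·|A'| ≤ 2|A|`. -/
theorem mean_row_sum_le (d : ℕ) (hd : 2 ≤ d)
    (p : ℝ) (hp0 : 0 ≤ p) (hpd : p * d < 1) (s : ℝ)
    (μ : ℕ → Measure (Config d))
    (hμ : ∀ k, 2 ≤ k → qparam d p s k ∈ Set.Icc (0 : ℝ) 1 →
      IsPercolation d k p (qparam d p s k) (μ k)) :
    ∃ K : ℕ, ∀ k, K ≤ k → ∀ A ∈ typeSpace d k,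
      ∑' A' : {A' : Set (Vert d) // A' ∈ typeSpace d k},
          meanOffspring d k (μ k) A A'.1 * ((A'.1.encard : ℕ∞) : ℝ≥0∞) ≤
        2 * ((A.encard : ℕ∞) : ℝ≥0∞) := by
  have hc : 0 < 1 - p * d := by linarith
  have hc1 : 1 - p * d ≤ 1 := by nlinarith [(Nat.cast_nonneg d : (0 : ℝ) ≤ d)]
  have hgrow : Tendsto (fun k => (d : ℝ) ^ k) atTop atTop :=
    tendsto_pow_atTop_atTop_of_one_lt (by exact_mod_cast hd)
  obtain ⟨K, hK⟩ := eventually_atTop.1 <|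
    (hgrow.eventually_ge_atTop (max 2 (|s| / (1 - p * d)))).and (eventually_ge_atTop 2)
  refine ⟨K, fun k hk A _ => ?_⟩
  obtain ⟨hx, hk2⟩ := hK k hk
  obtain ⟨hq, hxq⟩ := qparam_mem_Icc_and_pow_mul_le (by omega) hc1 (le_of_max_le_left hx)
    ((div_le_iff₀' hc).1 (le_of_max_le_right hx))
  calc _ ≤ A.encard * ((1 - d * ENNReal.ofReal p)⁻¹ * (d ^ k * ENNReal.ofReal (qparam d p s k))) :=
        (hμ k hk2 hq).tsum_meanOffspring_mul_encard_le (by omega) A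
    _ ≤ A.encard * 2 := by gcongr; exact inv_one_sub_mul_pow_mul_le_two hp0 hpd hxq
    _ = 2 * A.encard := mul_comm _ _
end
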